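/- arXiv:2506.13462 — 4 statements merged into one kernel-verified Lean document; each statement's English description precedes it below -/
import Mathlib

section
/- There exists a constant c ≥ 1, depending only on m, M and c₀, such that for every η > 0: c^{-1}·I(η) ≤ ∫₀^η ψ(Φ(t)) dt ≤ c·I(η), where I(η) = ∫_{ψ(Φ(η))}^∞ (φ^{-1}(W(s)^{-2}))^{-1/2} ds. In particular, ∫₀^η ψ(Φ(t)) dt < ∞ for some (equivalently, for all) η > 0 if and only if the Keller–Osserman condition ∫₁^∞ (φ^{-1}(W(t)^{-2}))^{-1/2} dt < ∞ holds. -/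
open MeasureTheory Set Filter Topology

noncomputable section

/-- `F(t) = ∫₀ᵗ f(s) ds`. -/
noncomputable def Fint (f : ℝ → ℝ) (t : ℝ) : ℝ := ∫ s in (0:ℝ)..t, f s

/-- `W(t) = ∫ₜ^∞ F(s)^{-1/2} ds`. -/
noncomputable def Wfun (f : ℝ → ℝ) (t : ℝ) : ℝ := ∫ s in Set.Ioi t, (Fint f s) ^ (-(1:ℝ)/2)

/-- `Φ(t) = φ(t^{-2})^{-1/2}`. -/
noncomputable def PhiFun (φ : ℝ → ℝ) (t : ℝ) : ℝ := (φ (t ^ (-(2:ℝ)))) ^ (-(1:ℝ)/2)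

/-- The Keller–Osserman kernel `t ↦ (φ^{-1}(W(t)^{-2}))^{-1/2}`. -/
noncomputable def KOker (φinv f : ℝ → ℝ) (t : ℝ) : ℝ :=
  (φinv ((Wfun f t) ^ (-(2:ℝ)))) ^ (-(1:ℝ)/2)



/-- If `t * u' t ≤ p * u t` on positive reals, then `u t * t^(-p)` is antitone there. -/
lemma KO.ratio_anti (u : ℝ → ℝ) (p : ℝ)
    (hu : ∀ t ∈ Set.Ioi (0:ℝ), DifferentiableAt ℝ u t)
    (hder : ∀ t > (0:ℝ), t * deriv u t ≤ p * u t) :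
    AntitoneOn (fun t => u t * t ^ (-p)) (Set.Ioi (0:ℝ)) := by
  have hD : ∀ t ∈ Set.Ioi (0:ℝ), HasDerivAt (fun t => u t * t ^ (-p))
      (deriv u t * t ^ (-p) + u t * (-p * t ^ (-p - 1))) t := by
    intro t ht
    exact ((hu t ht).hasDerivAt).mul (Real.hasDerivAt_rpow_const (Or.inl (ne_of_gt ht)))
  apply antitoneOn_of_deriv_nonpos (convex_Ioi 0)
  · intro t ht
    exact ((hD t ht).differentiableAt.continuousAt).continuousWithinAt
  · intro t ht
    rw [interior_Ioi] at ht
    exact (hD t ht).differentiableAt.differentiableWithinAt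
  · intro t ht
    rw [interior_Ioi] at ht
    have ht' : (0:ℝ) < t := ht
    rw [(hD t ht).deriv]
    have h1 : t ^ (-p) = t ^ (-p - 1) * t := by
      rw [← Real.rpow_add_one (ne_of_gt ht') (-p - 1)]; ring_nf
    have h2 : deriv u t * t ^ (-p) + u t * (-p * t ^ (-p - 1))
        = t ^ (-p - 1) * (t * deriv u t - p * u t) := by
      rw [h1]; ring
    rw [h2]
    exact mul_nonpos_of_nonneg_of_nonpos (Real.rpow_nonneg (le_of_lt ht') _)
      (sub_nonpos.mpr (hder t ht'))

lemma KO.ratio_mono (u : ℝ → ℝ) (p : ℝ)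
    (hu : ∀ t ∈ Set.Ioi (0:ℝ), DifferentiableAt ℝ u t)
    (hder : ∀ t > (0:ℝ), p * u t ≤ t * deriv u t) :
    MonotoneOn (fun t => u t * t ^ (-p)) (Set.Ioi (0:ℝ)) := by
  have hD : ∀ t ∈ Set.Ioi (0:ℝ), HasDerivAt (fun t => u t * t ^ (-p))
      (deriv u t * t ^ (-p) + u t * (-p * t ^ (-p - 1))) t := by
    intro t ht
    exact ((hu t ht).hasDerivAt).mul (Real.hasDerivAt_rpow_const (Or.inl (ne_of_gt ht)))
  apply monotoneOn_of_deriv_nonneg (convex_Ioi 0)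
  · intro t ht
    exact ((hD t ht).differentiableAt.continuousAt).continuousWithinAt
  · intro t ht
    rw [interior_Ioi] at ht
    exact (hD t ht).differentiableAt.differentiableWithinAt
  · intro t ht
    rw [interior_Ioi] at ht
    have ht' : (0:ℝ) < t := ht
    rw [(hD t ht).deriv]
    have h1 : t ^ (-p) = t ^ (-p - 1) * t := by
      rw [← Real.rpow_add_one (ne_of_gt ht') (-p - 1)]; ring_nf
    have h2 : deriv u t * t ^ (-p) + u t * (-p * t ^ (-p - 1))
        = t ^ (-p - 1) * (t * deriv u t - p * u t) := by
      rw [h1]; ring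
    rw [h2]
    exact mul_nonneg (Real.rpow_nonneg (le_of_lt ht') _)
      (sub_nonneg.mpr (hder t ht'))

/-- scaling consequence: `u (a*x) ≤ a^p * u x` for `1 ≤ a`. -/
lemma KO.scale_le (u : ℝ → ℝ) (p : ℝ)
    (hanti : AntitoneOn (fun t => u t * t ^ (-p)) (Set.Ioi (0:ℝ)))
    {x a : ℝ} (hx : 0 < x) (ha : 1 ≤ a) :
    u (a * x) ≤ a ^ p * u x := by
  have hax : 0 < a * x := mul_pos (lt_of_lt_of_le one_pos ha) hx
  have key := hanti (Set.mem_Ioi.mpr hx) (Set.mem_Ioi.mpr hax)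
    (le_mul_of_one_le_left hx.le ha)
  -- key : u (a*x) * (a*x)^(-p) ≤ u x * x^(-p)
  have h1 : u (a * x) = (u (a * x) * (a*x) ^ (-p)) * (a*x) ^ p := by
    rw [mul_assoc, ← Real.rpow_add hax, neg_add_cancel, Real.rpow_zero, mul_one]
  rw [h1]
  calc (u (a * x) * (a*x) ^ (-p)) * (a*x) ^ p ≤ (u x * x ^ (-p)) * (a*x) ^ p := by
        exact mul_le_mul_of_nonneg_right key (Real.rpow_nonneg hax.le _)
    _ = a ^ p * u x := by
        rw [Real.mul_rpow (le_of_lt (lt_of_lt_of_le one_pos ha)) hx.le]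
        have hxx : x ^ (-p) * x ^ p = 1 := by
          rw [← Real.rpow_add hx, neg_add_cancel, Real.rpow_zero]
        calc u x * x ^ (-p) * (a ^ p * x ^ p) = a ^ p * u x * (x ^ (-p) * x ^ p) := by ring
          _ = a ^ p * u x := by rw [hxx, mul_one]

/-- consequence of mono ratio: `u a ≤ u b * (a/b)^p` for `0 < a ≤ b`. -/
lemma KO.scale_ge (u : ℝ → ℝ) (p : ℝ)
    (hmono : MonotoneOn (fun t => u t * t ^ (-p)) (Set.Ioi (0:ℝ)))
    {a b : ℝ} (ha : 0 < a) (hab : a ≤ b) :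
    u a ≤ u b * (a / b) ^ p := by
  have hb : 0 < b := lt_of_lt_of_le ha hab
  have key := hmono (Set.mem_Ioi.mpr ha) (Set.mem_Ioi.mpr hb) hab
  have h1 : u a = (u a * a ^ (-p)) * a ^ p := by
    rw [mul_assoc, ← Real.rpow_add ha, neg_add_cancel, Real.rpow_zero, mul_one]
  rw [h1]
  calc (u a * a ^ (-p)) * a ^ p ≤ (u b * b ^ (-p)) * a ^ p :=
        mul_le_mul_of_nonneg_right key (Real.rpow_nonneg ha.le _)
    _ = u b * (a / b) ^ p := by
        rw [Real.div_rpow ha.le hb.le, Real.rpow_neg hb.le]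
        ring


section basics
variable (f : ℝ → ℝ) (hcont : Continuous f) (hfnn : ∀ t, 0 ≤ f t) (hfpos : ∀ t > (0:ℝ), 0 < f t)

set_option linter.unusedSectionVars false

include hcont in
lemma KO.fii (a b : ℝ) : IntervalIntegrable f volume a b := hcont.intervalIntegrable a b

include hcont hfnn in
lemma KO.Fint_nonneg {t : ℝ} (ht : 0 ≤ t) : 0 ≤ Fint f t :=
  intervalIntegral.integral_nonneg ht (fun x _ => hfnn x)

include hcont hfnn in
lemma KO.Fint_mono {a b : ℝ} (ha : 0 ≤ a) (hab : a ≤ b) : Fint f a ≤ Fint f b := by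
  have h := intervalIntegral.integral_add_adjacent_intervals
    (KO.fii f hcont 0 a) (KO.fii f hcont a b)
  have h2 : 0 ≤ ∫ s in a..b, f s := intervalIntegral.integral_nonneg hab (fun x _ => hfnn x)
  show Fint f a ≤ Fint f b
  unfold Fint
  rw [← h]; linarith

include hcont hfpos in
lemma KO.Fint_pos {t : ℝ} (ht : 0 < t) : 0 < Fint f t :=
  intervalIntegral.intervalIntegral_pos_of_pos_on (KO.fii f hcont 0 t)
    (fun x hx => hfpos x hx.1) ht

include hcont hfnn in
lemma KO.Fint_le (hfmono : Monotone f) {t : ℝ} (ht : 0 ≤ t) : Fint f t ≤ t * f t := by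
  have := intervalIntegral.integral_mono_on (μ := volume) (f := f) (g := fun _ => f t) ht
    (KO.fii f hcont 0 t) (intervalIntegrable_const)
    (fun x hx => hfmono hx.2)
  simpa [Fint, smul_eq_mul] using this

include hcont hfnn in
lemma KO.Fint_ge (hfmono : Monotone f) {t : ℝ} (ht : 0 ≤ t) : (t/2) * f (t/2) ≤ Fint f t := by
  have h := intervalIntegral.integral_add_adjacent_intervals
    (KO.fii f hcont 0 (t/2)) (KO.fii f hcont (t/2) t)
  have h1 : 0 ≤ ∫ s in (0:ℝ)..(t/2), f s :=
    intervalIntegral.integral_nonneg (by linarith) (fun x _ => hfnn x)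
  have h2 : (t - t/2) * f (t/2) ≤ ∫ s in (t/2)..t, f s := by
    have := intervalIntegral.integral_mono_on (μ := volume) (f := fun _ => f (t/2)) (g := f)
      (by linarith : t/2 ≤ t) (intervalIntegrable_const) (KO.fii f hcont (t/2) t)
      (fun x hx => hfmono hx.1)
    simpa [smul_eq_mul] using this
  show (t/2) * f (t/2) ≤ Fint f t
  unfold Fint
  rw [← h]
  have : t - t/2 = t/2 := by ring
  rw [this] at h2
  linarith
end basics

section wfun
variable (f : ℝ → ℝ) (hcont : Continuous f) (hfnn : ∀ t, 0 ≤ f t) (hfpos : ∀ t > (0:ℝ), 0 < f t)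
  (hWfin : ∀ t > (0:ℝ), IntegrableOn (fun s => (Fint f s) ^ (-(1:ℝ)/2)) (Set.Ioi t))

set_option linter.unusedSectionVars false

include hWfin in
lemma KO.W_split {a b : ℝ} (ha : 0 < a) (hab : a ≤ b) :
    Wfun f a = (∫ s in Set.Ioc a b, (Fint f s) ^ (-(1:ℝ)/2)) + Wfun f b := by
  have hb : 0 < b := lt_of_lt_of_le ha hab
  have h1 : IntegrableOn (fun s => (Fint f s) ^ (-(1:ℝ)/2)) (Set.Ioc a b) :=
    (hWfin a ha).mono_set (fun x hx => hx.1)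
  have h2 : IntegrableOn (fun s => (Fint f s) ^ (-(1:ℝ)/2)) (Set.Ioi b) := hWfin b hb
  have := setIntegral_union (Set.Ioc_disjoint_Ioi le_rfl) measurableSet_Ioi h1 h2
    (f := fun s => (Fint f s) ^ (-(1:ℝ)/2)) (μ := volume)
  rw [Set.Ioc_union_Ioi_eq_Ioi hab] at this
  exact this

include hcont hfnn hfpos hWfin in
lemma KO.W_chunk_le {a b : ℝ} (ha : 0 < a) (hab : a ≤ b) :
    (∫ s in Set.Ioc a b, (Fint f s) ^ (-(1:ℝ)/2)) ≤ (b - a) * (Fint f a) ^ (-(1:ℝ)/2) := by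
  have h1 : IntegrableOn (fun s => (Fint f s) ^ (-(1:ℝ)/2)) (Set.Ioc a b) :=
    (hWfin a ha).mono_set (fun x hx => hx.1)
  have hFa : 0 < Fint f a := KO.Fint_pos f hcont hfpos ha
  have hb : ∀ x ∈ Set.Ioc a b, (Fint f x) ^ (-(1:ℝ)/2) ≤ (Fint f a) ^ (-(1:ℝ)/2) := by
    intro x hx
    exact Real.rpow_le_rpow_of_nonpos hFa
      (KO.Fint_mono f hcont hfnn ha.le hx.1.le) (by norm_num)
  have := setIntegral_mono_on h1 (integrableOn_const measure_Ioc_lt_top.ne)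
    measurableSet_Ioc hb
  rw [setIntegral_const, Real.volume_real_Ioc_of_le hab, smul_eq_mul] at this
  exact this

include hcont hfnn hfpos hWfin in
lemma KO.W_chunk_ge {a b : ℝ} (ha : 0 < a) (hab : a ≤ b) :
    (b - a) * (Fint f b) ^ (-(1:ℝ)/2) ≤ (∫ s in Set.Ioc a b, (Fint f s) ^ (-(1:ℝ)/2)) := by
  have hb0 : 0 < b := lt_of_lt_of_le ha hab
  have h1 : IntegrableOn (fun s => (Fint f s) ^ (-(1:ℝ)/2)) (Set.Ioc a b) :=
    (hWfin a ha).mono_set (fun x hx => hx.1)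
  have hb : ∀ x ∈ Set.Ioc a b, (Fint f b) ^ (-(1:ℝ)/2) ≤ (Fint f x) ^ (-(1:ℝ)/2) := by
    intro x hx
    exact Real.rpow_le_rpow_of_nonpos (KO.Fint_pos f hcont hfpos (ha.trans hx.1))
      (KO.Fint_mono f hcont hfnn (ha.trans hx.1).le hx.2) (by norm_num)
  have := setIntegral_mono_on (integrableOn_const measure_Ioc_lt_top.ne) h1
    measurableSet_Ioc hb
  rw [setIntegral_const, Real.volume_real_Ioc_of_le hab, smul_eq_mul] at this
  exact this

include hcont hfnn hfpos hWfin in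
lemma KO.W_nonneg {t : ℝ} (ht : 0 < t) : 0 ≤ Wfun f t := by
  apply setIntegral_nonneg measurableSet_Ioi
  intro x hx
  exact Real.rpow_nonneg (KO.Fint_nonneg f hcont hfnn (le_of_lt (ht.trans hx))) _

include hcont hfnn hfpos hWfin in
lemma KO.W_strictAnti {a b : ℝ} (ha : 0 < a) (hab : a < b) : Wfun f b < Wfun f a := by
  have h := KO.W_split f hWfin ha hab.le
  have h2 := KO.W_chunk_ge f hcont hfnn hfpos hWfin ha hab.le
  have h3 : 0 < (b - a) * (Fint f b) ^ (-(1:ℝ)/2) :=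
    mul_pos (by linarith) (Real.rpow_pos_of_pos (KO.Fint_pos f hcont hfpos (ha.trans hab)) _)
  linarith

include hcont hfnn hfpos hWfin in
lemma KO.W_pos {t : ℝ} (ht : 0 < t) : 0 < Wfun f t := by
  have h := KO.W_split f hWfin ht (by linarith : t ≤ 2*t)
  have h2 := KO.W_chunk_ge f hcont hfnn hfpos hWfin ht (by linarith : t ≤ 2*t)
  have h3 : 0 < (2*t - t) * (Fint f (2*t)) ^ (-(1:ℝ)/2) :=
    mul_pos (by linarith) (Real.rpow_pos_of_pos (KO.Fint_pos f hcont hfpos (by linarith)) _)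
  have h4 := KO.W_nonneg f hcont hfnn hfpos hWfin (by linarith : (0:ℝ) < 2*t)
  linarith
end wfun

section doubling
variable (M : ℝ) (hM : 0 < M) (f : ℝ → ℝ) (hcont : Continuous f)
  (hfnn : ∀ t, 0 ≤ f t) (hfpos : ∀ t > (0:ℝ), 0 < f t)
  (hfC1 : ContDiff ℝ 1 f) (hfmono : Monotone f)
  (hfub : ∀ t > (0:ℝ), t * deriv f t ≤ (1 + M) * f t)
  (hWfin : ∀ t > (0:ℝ), IntegrableOn (fun s => (Fint f s) ^ (-(1:ℝ)/2)) (Set.Ioi t))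

set_option linter.unusedSectionVars false

include hfC1 hfub in
lemma KO.f_scale {x a : ℝ} (hx : 0 < x) (ha : 1 ≤ a) : f (a * x) ≤ a ^ (1+M) * f x :=
  KO.scale_le f (1+M)
    (KO.ratio_anti f (1+M) (fun t _ => (hfC1.differentiable one_ne_zero).differentiableAt) hfub)
    hx ha

include hM hcont hfnn hfpos hfC1 hfmono hfub in
lemma KO.F_double {t : ℝ} (ht : 0 < t) :
    Fint f (4*t) ≤ (8 * (4:ℝ) ^ (1+M) * (2:ℝ) ^ (1+M)) * Fint f t := by
  have h1 : Fint f (4*t) ≤ (4*t) * f (4*t) := KO.Fint_le f hcont hfnn hfmono (by linarith)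
  have h2 : f (4*t) ≤ (4:ℝ) ^ (1+M) * f t := KO.f_scale M f hfC1 hfub ht (by norm_num)
  have h3 : f t ≤ (2:ℝ) ^ (1+M) * f (t/2) := by
    have := KO.f_scale M f hfC1 hfub (by linarith : (0:ℝ) < t/2) (by norm_num : (1:ℝ) ≤ 2)
    simpa [show 2 * (t/2) = t by ring] using this
  have h4 : (t/2) * f (t/2) ≤ Fint f t := KO.Fint_ge f hcont hfnn hfmono (by linarith)
  have hA1 : (0:ℝ) < (4:ℝ) ^ (1+M) := Real.rpow_pos_of_pos (by norm_num) _
  have hA2 : (0:ℝ) < (2:ℝ) ^ (1+M) := Real.rpow_pos_of_pos (by norm_num) _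
  have hfnn2 := hfnn (t/2)
  have hfnn4 := hfnn (4*t)
  nlinarith [mul_le_mul_of_nonneg_left h2 (by linarith : (0:ℝ) ≤ 4*t),
    mul_le_mul_of_nonneg_left h3 (by positivity : (0:ℝ) ≤ 4*t*(4:ℝ)^(1+M)),
    mul_le_mul_of_nonneg_left h4 (by positivity : (0:ℝ) ≤ 8*(4:ℝ)^(1+M)*(2:ℝ)^(1+M))]

include hM hcont hfnn hfpos hfC1 hfmono hfub hWfin in
lemma KO.W_double {t : ℝ} (ht : 0 < t) :
    Wfun f t ≤ (1 + (8 * (4:ℝ) ^ (1+M) * (2:ℝ) ^ (1+M)) ^ ((1:ℝ)/2) / 2) * Wfun f (2*t) := by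
  set C : ℝ := 8 * (4:ℝ) ^ (1+M) * (2:ℝ) ^ (1+M) with hC
  have hCpos : 0 < C := by positivity
  have hFt : 0 < Fint f t := KO.Fint_pos f hcont hfpos ht
  have hF4t : 0 < Fint f (4*t) := KO.Fint_pos f hcont hfpos (by linarith)
  -- (F t)^(-1/2) ≤ C^(1/2) * (F (4t))^(-1/2)
  have key : (Fint f t) ^ (-(1:ℝ)/2) ≤ C ^ ((1:ℝ)/2) * (Fint f (4*t)) ^ (-(1:ℝ)/2) := by
    have h0 : (Fint f (4*t)) ^ (-(1:ℝ)/2) ≥ (C * Fint f t) ^ (-(1:ℝ)/2) :=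
      Real.rpow_le_rpow_of_nonpos (by positivity)
        (KO.F_double M hM f hcont hfnn hfpos hfC1 hfmono hfub ht) (by norm_num)
    have h1 : (C * Fint f t) ^ (-(1:ℝ)/2) = C ^ (-(1:ℝ)/2) * (Fint f t) ^ (-(1:ℝ)/2) :=
      Real.mul_rpow hCpos.le hFt.le
    have h2 := mul_le_mul_of_nonneg_left (h1 ▸ h0) (Real.rpow_nonneg hCpos.le ((1:ℝ)/2))
    calc (Fint f t) ^ (-(1:ℝ)/2)
        = (C ^ ((1:ℝ)/2) * C ^ (-(1:ℝ)/2)) * (Fint f t) ^ (-(1:ℝ)/2) := by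
          rw [← Real.rpow_add hCpos]; norm_num
      _ = C ^ ((1:ℝ)/2) * (C ^ (-(1:ℝ)/2) * (Fint f t) ^ (-(1:ℝ)/2)) := by ring
      _ ≤ C ^ ((1:ℝ)/2) * (Fint f (4*t)) ^ (-(1:ℝ)/2) := h2
  have hsplit := KO.W_split f hWfin ht (by linarith : t ≤ 2*t)
  have hchunk1 : (∫ s in Set.Ioc t (2*t), (Fint f s) ^ (-(1:ℝ)/2))
      ≤ (2*t - t) * (Fint f t) ^ (-(1:ℝ)/2) :=
    KO.W_chunk_le f hcont hfnn hfpos hWfin ht (by linarith)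
  have hchunk2 : (4*t - 2*t) * (Fint f (4*t)) ^ (-(1:ℝ)/2)
      ≤ (∫ s in Set.Ioc (2*t) (4*t), (Fint f s) ^ (-(1:ℝ)/2)) :=
    KO.W_chunk_ge f hcont hfnn hfpos hWfin (by linarith) (by linarith)
  have hsplit2 := KO.W_split f hWfin (by linarith : (0:ℝ) < 2*t) (by linarith : 2*t ≤ 4*t)
  have hW4 : 0 ≤ Wfun f (4*t) := KO.W_nonneg f hcont hfnn hfpos hWfin (by linarith)
  -- chunk(t,2t) ≤ t*(F t)^(-1/2) ≤ t*C^(1/2)*(F 4t)^(-1/2) = (C^(1/2)/2)*(2t*(F 4t)^(-1/2))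
  --   ≤ (C^(1/2)/2)*chunk(2t,4t) ≤ (C^(1/2)/2)*W(2t)
  have hCs : 0 ≤ C ^ ((1:ℝ)/2) := Real.rpow_nonneg hCpos.le _
  nlinarith [mul_le_mul_of_nonneg_left key (by linarith : (0:ℝ) ≤ t),
    mul_le_mul_of_nonneg_left hchunk2 (by linarith : (0:ℝ) ≤ C ^ ((1:ℝ)/2) / 2)]
end doubling

section phi
variable (c₀ : ℝ) (hc₀ : 1 ≤ c₀) (φ : ℝ → ℝ) (hφpos : ∀ t > (0:ℝ), 0 < φ t)
  (hφmono : StrictMonoOn φ (Set.Ioi 0)) (hφC1 : ContDiffOn ℝ 1 φ (Set.Ioi 0))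
  (hφlb : ∀ t > (0:ℝ), c₀⁻¹ * (φ t / t) ≤ deriv φ t)

set_option linter.unusedSectionVars false

include hφpos in
lemma KO.Phi_pos {t : ℝ} (ht : 0 < t) : 0 < PhiFun φ t :=
  Real.rpow_pos_of_pos (hφpos _ (Real.rpow_pos_of_pos ht _)) _

include hφmono in
lemma KO.Phi_strictMono (hφpos : ∀ t > (0:ℝ), 0 < φ t) :
    StrictMonoOn (PhiFun φ) (Set.Ioi (0:ℝ)) := by
  intro a ha b hb hab
  have h1 : b ^ (-(2:ℝ)) < a ^ (-(2:ℝ)) := Real.rpow_lt_rpow_of_neg ha hab (by norm_num)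
  have hb2 : (0:ℝ) < b ^ (-(2:ℝ)) := Real.rpow_pos_of_pos hb _
  have h2 : φ (b ^ (-(2:ℝ))) < φ (a ^ (-(2:ℝ))) :=
    hφmono (Set.mem_Ioi.mpr hb2) (Set.mem_Ioi.mpr (hb2.trans h1)) h1
  exact Real.rpow_lt_rpow_of_neg (hφpos _ hb2) h2 (by norm_num)

include hc₀ hφpos hφC1 hφlb in
lemma KO.Phi_scale {η ε : ℝ} (hη : 0 < η) (hε : 0 < ε) (hε1 : ε ≤ 1) :
    PhiFun φ (ε * η) ≤ ε ^ (c₀⁻¹) * PhiFun φ η := by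
  have hmono : MonotoneOn (fun t => φ t * t ^ (-(c₀⁻¹))) (Set.Ioi (0:ℝ)) := by
    apply KO.ratio_mono φ c₀⁻¹
    · intro t ht
      exact (hφC1.differentiableOn one_ne_zero).differentiableAt (Ioi_mem_nhds ht)
    · intro t ht
      have := hφlb t ht
      have h2 : c₀⁻¹ * (φ t / t) * t = c₀⁻¹ * φ t := by
        field_simp
      nlinarith
  set a : ℝ := η ^ (-(2:ℝ)) with hadef
  set b : ℝ := (ε * η) ^ (-(2:ℝ)) with hbdef
  have ha : 0 < a := Real.rpow_pos_of_pos hη _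
  have hb : 0 < b := Real.rpow_pos_of_pos (by positivity) _
  have hab : a ≤ b := by
    rw [hadef, hbdef]
    exact Real.rpow_le_rpow_of_nonpos (by positivity) (by nlinarith) (by norm_num)
  have key : φ a ≤ φ b * (a / b) ^ (c₀⁻¹) := KO.scale_ge φ c₀⁻¹ hmono ha hab
  have hba : a / b = ε ^ (2:ℝ) := by
    rw [hadef, hbdef, Real.mul_rpow hε.le hη.le, div_eq_iff (by positivity),
      ← mul_assoc, ← Real.rpow_add hε]
    norm_num
  rw [hba] at key
  have hφa : 0 < φ a := hφpos a ha
  have hφb : 0 < φ b := hφpos b hb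
  -- key : φ a ≤ φ b * ε^(2/c₀) ; want (φ b)^(-1/2) ≤ ε^(1/c₀) * (φ a)^(-1/2)
  have hεp : (0:ℝ) < ε ^ ((2:ℝ) * c₀⁻¹) := Real.rpow_pos_of_pos hε _
  have key2 : φ a * (ε ^ ((2:ℝ) * c₀⁻¹))⁻¹ ≤ φ b := by
    rw [← Real.rpow_mul hε.le] at key
    rw [← div_eq_mul_inv, div_le_iff₀ hεp]
    exact key
  have key3 : PhiFun φ (ε * η) ≤ (φ a * (ε ^ ((2:ℝ) * c₀⁻¹))⁻¹) ^ (-(1:ℝ)/2) := by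
    unfold PhiFun
    exact Real.rpow_le_rpow_of_nonpos (by positivity) key2 (by norm_num)
  refine key3.trans (le_of_eq ?_)
  rw [← Real.rpow_neg hε.le, Real.mul_rpow hφa.le (Real.rpow_nonneg hε.le _),
    ← Real.rpow_mul hε.le]
  unfold PhiFun
  rw [mul_comm]
  congr 1
  ring
end phi


lemma KO.layercake (g h : ℝ → ℝ) (η : ℝ) (hη : 0 < η)
    (hganti : AntitoneOn g (Set.Ioi 0)) (hgpos : ∀ t > (0:ℝ), 0 < g t)
    (hhpos : ∀ s > (0:ℝ), 0 < h s)
    (hinv : ∀ t > (0:ℝ), ∀ s > (0:ℝ), (s < g t ↔ t < h s))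
    (hgh : h (g η) = η) (hh_anti : StrictAntiOn h (Set.Ioi 0)) :
    ∫⁻ t in Set.Ioc (0:ℝ) η, ENNReal.ofReal (g t)
      = ENNReal.ofReal (η * g η) + ∫⁻ s in Set.Ioi (g η), ENNReal.ofReal (h s) := by
  have hgη : 0 < g η := hgpos η hη
  -- step 1: layer cake
  have hmble : AEMeasurable g (volume.restrict (Set.Ioc (0:ℝ) η)) :=
    aemeasurable_restrict_of_antitoneOn measurableSet_Ioc
      (hganti.mono (fun x hx => hx.1))
  have hnn : 0 ≤ᵐ[volume.restrict (Set.Ioc (0:ℝ) η)] g :=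
    (ae_restrict_iff' measurableSet_Ioc).mpr (ae_of_all _ fun x hx => (hgpos x hx.1).le)
  rw [lintegral_eq_lintegral_meas_lt _ hnn hmble]
  -- step 2: compute the measures
  have hmeas : ∀ s ∈ Set.Ioi (0:ℝ),
      (volume.restrict (Set.Ioc (0:ℝ) η)) {a : ℝ | s < g a}
        = ENNReal.ofReal (min η (h s)) := by
    intro s hs
    have hs' : (0:ℝ) < s := hs
    have hhs : 0 < h s := hhpos s hs'
    rw [Measure.restrict_apply' measurableSet_Ioc]
    have sub1 : Set.Ioo 0 (min η (h s)) ⊆ {a : ℝ | s < g a} ∩ Set.Ioc 0 η := by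
      intro t ht
      obtain ⟨ht0, htm⟩ := ht
      constructor
      · exact (hinv t ht0 s hs').mpr (lt_of_lt_of_le htm (min_le_right _ _))
      · exact ⟨ht0, le_of_lt (lt_of_lt_of_le htm (min_le_left _ _))⟩
    have sub2 : {a : ℝ | s < g a} ∩ Set.Ioc 0 η ⊆ Set.Ioc 0 (min η (h s)) := by
      intro t ht
      obtain ⟨ht1, ht2⟩ := ht
      have ht0 : 0 < t := ht2.1
      have : t < h s := (hinv t ht0 s hs').mp ht1
      exact ⟨ht0, le_min ht2.2 this.le⟩
    apply le_antisymm
    · calc volume ({a : ℝ | s < g a} ∩ Set.Ioc 0 η) ≤ volume (Set.Ioc 0 (min η (h s))) :=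
            measure_mono sub2
        _ = ENNReal.ofReal (min η (h s)) := by rw [Real.volume_Ioc, sub_zero]
    · calc ENNReal.ofReal (min η (h s)) = volume (Set.Ioo 0 (min η (h s))) := by
            rw [Real.volume_Ioo, sub_zero]
        _ ≤ volume ({a : ℝ | s < g a} ∩ Set.Ioc 0 η) := measure_mono sub1
  rw [setLIntegral_congr_fun_ae measurableSet_Ioi (ae_of_all _ hmeas)]
  -- step 3: split the integral
  have hsplit : volume.restrict (Set.Ioi (0:ℝ))
      = volume.restrict (Set.Ioc 0 (g η)) + volume.restrict (Set.Ioi (g η)) := by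
    rw [← Measure.restrict_union (Set.Ioc_disjoint_Ioi le_rfl) measurableSet_Ioi,
      Set.Ioc_union_Ioi_eq_Ioi hgη.le]
  rw [show (∫⁻ s in Set.Ioi (0:ℝ), ENNReal.ofReal (min η (h s)))
      = ∫⁻ s, ENNReal.ofReal (min η (h s)) ∂(volume.restrict (Set.Ioi (0:ℝ))) from rfl,
    hsplit, lintegral_add_measure]
  congr 1
  · -- on Ioc 0 (g η) : min η (h s) = η
    have : ∀ᵐ s ∂volume, s ∈ Set.Ioc (0:ℝ) (g η) →
        ENNReal.ofReal (min η (h s)) = ENNReal.ofReal η := by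
      apply ae_of_all
      intro s hs
      have : η ≤ h s := by
        rcases eq_or_lt_of_le hs.2 with h1 | h1
        · rw [h1, hgh]
        · exact le_of_lt (hgh ▸ hh_anti (Set.mem_Ioi.mpr hs.1) (Set.mem_Ioi.mpr hgη) h1)
      rw [min_eq_left this]
    rw [setLIntegral_congr_fun_ae measurableSet_Ioc this, setLIntegral_const,
      Real.volume_Ioc, sub_zero, ← ENNReal.ofReal_mul hη.le]
  · -- on Ioi (g η) : min η (h s) = h s
    have : ∀ᵐ s ∂volume, s ∈ Set.Ioi (g η) →
        ENNReal.ofReal (min η (h s)) = ENNReal.ofReal (h s) := by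
      apply ae_of_all
      intro s hs
      have : h s < η := hgh ▸ hh_anti (Set.mem_Ioi.mpr hgη) (Set.mem_Ioi.mpr (hgη.trans hs)) hs
      rw [min_eq_right this.le]
    rw [setLIntegral_congr_fun_ae measurableSet_Ioi this]


lemma KO.collapse₁ {x : ℝ} (hx : 0 < x) : (x ^ (-(1:ℝ)/2)) ^ (-(2:ℝ)) = x := by
  rw [← Real.rpow_mul hx.le]
  norm_num

lemma KO.collapse₂ {x : ℝ} (hx : 0 < x) : (x ^ (-(2:ℝ))) ^ (-(1:ℝ)/2) = x := by
  rw [← Real.rpow_mul hx.le]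
  norm_num

/-- tail comparison for a nonneg antitone kernel -/
lemma KO.tail_le (h : ℝ → ℝ) (hanti : ∀ x y, 0 < x → x ≤ y → h y ≤ h x)
    {a b : ℝ} (ha : 0 < a) (hb : 0 < b)
    (hfin : (∫⁻ s in Set.Ioi a, ENNReal.ofReal (h s)) < ⊤) :
    (∫⁻ s in Set.Ioi b, ENNReal.ofReal (h s)) < ⊤ := by
  rcases le_or_gt a b with hab | hab
  · exact lt_of_le_of_lt
      (lintegral_mono' (Measure.restrict_mono (Set.Ioi_subset_Ioi hab) le_rfl) le_rfl) hfin
  · have hsplit : volume.restrict (Set.Ioi b)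
        = volume.restrict (Set.Ioc b a) + volume.restrict (Set.Ioi a) := by
      rw [← Measure.restrict_union (Set.Ioc_disjoint_Ioi le_rfl) measurableSet_Ioi,
        Set.Ioc_union_Ioi_eq_Ioi hab.le]
    rw [show (∫⁻ s in Set.Ioi b, ENNReal.ofReal (h s))
        = ∫⁻ s, ENNReal.ofReal (h s) ∂(volume.restrict (Set.Ioi b)) from rfl,
      hsplit, lintegral_add_measure]
    apply ENNReal.add_lt_top.mpr
    constructor
    · calc (∫⁻ s in Set.Ioc b a, ENNReal.ofReal (h s))
          ≤ ∫⁻ _ in Set.Ioc b a, ENNReal.ofReal (h b) := by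
            apply setLIntegral_mono' measurableSet_Ioc
            intro x hx
            exact ENNReal.ofReal_le_ofReal (hanti b x hb hx.1.le)
        _ = ENNReal.ofReal (h b) * volume (Set.Ioc b a) := setLIntegral_const _ _
        _ < ⊤ := ENNReal.mul_lt_top ENNReal.ofReal_lt_top measure_Ioc_lt_top
    · exact hfin


lemma KO.final (g h : ℝ → ℝ) (ε : ℝ) (hεpos : 0 < ε) (hε1 : ε ≤ 1)
    (hgsa : StrictAntiOn g (Set.Ioi 0)) (hgpos : ∀ t > (0:ℝ), 0 < g t)
    (hhpos : ∀ s > (0:ℝ), 0 < h s)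
    (hhg : ∀ t > (0:ℝ), h (g t) = t)
    (hhsa : StrictAntiOn h (Set.Ioi 0))
    (hinv : ∀ t > (0:ℝ), ∀ s > (0:ℝ), (s < g t ↔ t < h s))
    (hkey : ∀ η > (0:ℝ), 2 * g η ≤ g (ε * η)) :
    ∃ c : ℝ, 1 ≤ c ∧
      (∀ η > (0:ℝ),
        (∫⁻ s in Set.Ioi (g η), ENNReal.ofReal (h s))
          ≤ ENNReal.ofReal c * (∫⁻ t in Set.Ioc (0:ℝ) η, ENNReal.ofReal (g t)) ∧
        (∫⁻ t in Set.Ioc (0:ℝ) η, ENNReal.ofReal (g t))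
          ≤ ENNReal.ofReal c * (∫⁻ s in Set.Ioi (g η), ENNReal.ofReal (h s))) ∧
      ((∃ η > (0:ℝ), (∫⁻ t in Set.Ioc (0:ℝ) η, ENNReal.ofReal (g t)) < ⊤) ↔
        (∫⁻ t in Set.Ioi (1:ℝ), ENNReal.ofReal (h t)) < ⊤) ∧
      ((∀ η > (0:ℝ), (∫⁻ t in Set.Ioc (0:ℝ) η, ENNReal.ofReal (g t)) < ⊤) ↔
        (∫⁻ t in Set.Ioi (1:ℝ), ENNReal.ofReal (h t)) < ⊤) := by
  have hganti : AntitoneOn g (Set.Ioi 0) := hgsa.antitoneOn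
  have hhanti : ∀ x y, 0 < x → x ≤ y → h y ≤ h x := by
    intro x y hx hxy
    rcases eq_or_lt_of_le hxy with rfl | hlt
    · exact le_rfl
    · exact (hhsa (Set.mem_Ioi.mpr hx) (Set.mem_Ioi.mpr (hx.trans hlt)) hlt).le
  have hmain : ∀ η, 0 < η →
      (∫⁻ t in Set.Ioc (0:ℝ) η, ENNReal.ofReal (g t))
        = ENNReal.ofReal (η * g η) + ∫⁻ s in Set.Ioi (g η), ENNReal.ofReal (h s) :=
    fun η hη => KO.layercake g h η hη hganti hgpos hhpos hinv (hhg η hη) hhsa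
  have hlow : ∀ η, 0 < η →
      ENNReal.ofReal (ε * (η * g η)) ≤ ∫⁻ s in Set.Ioi (g η), ENNReal.ofReal (h s) := by
    intro η hη
    have hgη : 0 < g η := hgpos η hη
    have h2G : ε * η ≤ h (2 * g η) := by
      have h1 : h (g (ε * η)) ≤ h (2 * g η) :=
        hhanti (2 * g η) (g (ε * η)) (by linarith) (hkey η hη)
      rwa [hhg (ε * η) (by positivity)] at h1
    calc ENNReal.ofReal (ε * (η * g η))
        = ENNReal.ofReal (ε * η) * ENNReal.ofReal (g η) := by
          rw [← ENNReal.ofReal_mul (by positivity)]; ring_nf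
      _ = ∫⁻ _ in Set.Ioc (g η) (2 * g η), ENNReal.ofReal (ε * η) := by
          rw [setLIntegral_const, Real.volume_Ioc,
            show 2 * g η - g η = g η by ring]
      _ ≤ ∫⁻ s in Set.Ioc (g η) (2 * g η), ENNReal.ofReal (h s) := by
          apply setLIntegral_mono' measurableSet_Ioc
          intro x hx
          exact ENNReal.ofReal_le_ofReal
            (le_trans h2G (hhanti x (2 * g η) (hgη.trans hx.1) hx.2))
      _ ≤ ∫⁻ s in Set.Ioi (g η), ENNReal.ofReal (h s) :=
          lintegral_mono' (Measure.restrict_mono (fun x hx => hx.1) le_rfl) le_rfl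
  have hεinv : 0 < ε⁻¹ := by positivity
  refine ⟨1 + ε⁻¹, by linarith, ?_, ?_, ?_⟩
  · intro η hη
    have hId := hmain η hη
    have hc1 : (1:ENNReal) ≤ ENNReal.ofReal (1 + ε⁻¹) := by
      rw [ENNReal.one_le_ofReal]
      have : 0 < ε⁻¹ := by positivity
      linarith
    constructor
    · calc (∫⁻ s in Set.Ioi (g η), ENNReal.ofReal (h s))
          ≤ (∫⁻ t in Set.Ioc (0:ℝ) η, ENNReal.ofReal (g t)) := by rw [hId]; exact le_add_self
        _ = 1 * (∫⁻ t in Set.Ioc (0:ℝ) η, ENNReal.ofReal (g t)) := (one_mul _).symm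
        _ ≤ ENNReal.ofReal (1 + ε⁻¹) * (∫⁻ t in Set.Ioc (0:ℝ) η, ENNReal.ofReal (g t)) :=
            mul_le_mul_left hc1 _
    · have h1 : ENNReal.ofReal (η * g η)
          ≤ ENNReal.ofReal ε⁻¹ * ∫⁻ s in Set.Ioi (g η), ENNReal.ofReal (h s) := by
        calc ENNReal.ofReal (η * g η)
            = ENNReal.ofReal ε⁻¹ * ENNReal.ofReal (ε * (η * g η)) := by
              rw [← ENNReal.ofReal_mul (by positivity)]
              congr 1
              field_simp
          _ ≤ ENNReal.ofReal ε⁻¹ * ∫⁻ s in Set.Ioi (g η), ENNReal.ofReal (h s) :=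
              mul_le_mul_right (hlow η hη) _
      calc (∫⁻ t in Set.Ioc (0:ℝ) η, ENNReal.ofReal (g t))
          = ENNReal.ofReal (η * g η) + ∫⁻ s in Set.Ioi (g η), ENNReal.ofReal (h s) := hId
        _ ≤ ENNReal.ofReal ε⁻¹ * (∫⁻ s in Set.Ioi (g η), ENNReal.ofReal (h s))
              + 1 * (∫⁻ s in Set.Ioi (g η), ENNReal.ofReal (h s)) := by
            rw [one_mul]; exact add_le_add h1 le_rfl
        _ = (ENNReal.ofReal ε⁻¹ + 1) * (∫⁻ s in Set.Ioi (g η), ENNReal.ofReal (h s)) :=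
            (add_mul _ _ _).symm
        _ = ENNReal.ofReal (1 + ε⁻¹) * (∫⁻ s in Set.Ioi (g η), ENNReal.ofReal (h s)) := by
            rw [ENNReal.ofReal_add one_pos.le (by positivity), ENNReal.ofReal_one, add_comm]
  · constructor
    · rintro ⟨η, hη, hB⟩
      have hA : (∫⁻ s in Set.Ioi (g η), ENNReal.ofReal (h s)) < ⊤ := by
        rw [hmain η hη] at hB
        exact lt_of_le_of_lt le_add_self hB
      exact KO.tail_le h hhanti (hgpos η hη) one_pos hA
    · intro hT
      refine ⟨1, one_pos, ?_⟩
      rw [hmain 1 one_pos]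
      exact ENNReal.add_lt_top.mpr ⟨ENNReal.ofReal_lt_top,
        KO.tail_le h hhanti one_pos (hgpos 1 one_pos) hT⟩
  · constructor
    · intro hB
      have hb := hB 1 one_pos
      have hA : (∫⁻ s in Set.Ioi (g 1), ENNReal.ofReal (h s)) < ⊤ := by
        rw [hmain 1 one_pos] at hb
        exact lt_of_le_of_lt le_add_self hb
      exact KO.tail_le h hhanti (hgpos 1 one_pos) one_pos hA
    · intro hT η hη
      rw [hmain η hη]
      exact ENNReal.add_lt_top.mpr ⟨ENNReal.ofReal_lt_top,
        KO.tail_le h hhanti one_pos (hgpos η hη) hT⟩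


/-- Comparison of `∫₀^η ψ(Φ(t)) dt` with `I(η) = ∫_{ψ(Φ(η))}^∞ (φ^{-1}(W(s)^{-2}))^{-1/2} ds`,
and the equivalence of the finiteness of `∫₀^η ψ(Φ(t)) dt` with the Keller–Osserman
condition `∫₁^∞ (φ^{-1}(W(t)^{-2}))^{-1/2} dt < ∞`. -/
theorem integrability_iff_keller_osserman
    (m M : ℝ) (hm : 0 < m) (hmM : m ≤ M)
    (f : ℝ → ℝ) (hf0 : f 0 = 0) (hfnn : ∀ t, 0 ≤ f t) (hfpos : ∀ t > 0, 0 < f t)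
    (hfC1 : ContDiff ℝ 1 f) (hfmono : Monotone f)
    (hfscal : ∀ t > 0, (1 + m) * f t ≤ t * deriv f t ∧ t * deriv f t ≤ (1 + M) * f t)
    (hWfin : ∀ t > 0, IntegrableOn (fun s => (Fint f s) ^ (-(1:ℝ)/2)) (Set.Ioi t))
    (ψ : ℝ → ℝ) (hψpos : ∀ t > 0, 0 < ψ t)
    (hψW : ∀ t > 0, ψ (Wfun f t) = t) (hWψ : ∀ t > 0, Wfun f (ψ t) = t)
    (c₀ : ℝ) (hc₀ : 1 ≤ c₀)
    (φ : ℝ → ℝ) (hφpos : ∀ t > 0, 0 < φ t) (hφmono : StrictMonoOn φ (Set.Ioi 0))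
    (hφC1 : ContDiffOn ℝ 1 φ (Set.Ioi 0))
    (hφderiv : ∀ t > 0, c₀⁻¹ * (φ t / t) ≤ deriv φ t ∧ deriv φ t ≤ c₀ * (φ t / t))
    (φinv : ℝ → ℝ) (hφinvpos : ∀ t > 0, 0 < φinv t)
    (hφinv₁ : ∀ t > 0, φinv (φ t) = t) (hφinv₂ : ∀ t > 0, φ (φinv t) = t) :
    ∃ c : ℝ, 1 ≤ c ∧
      (∀ η > 0,
        (∫⁻ s in Set.Ioi (ψ (PhiFun φ η)), ENNReal.ofReal (KOker φinv f s))
          ≤ ENNReal.ofReal c * (∫⁻ t in Set.Ioc (0:ℝ) η, ENNReal.ofReal (ψ (PhiFun φ t))) ∧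
        (∫⁻ t in Set.Ioc (0:ℝ) η, ENNReal.ofReal (ψ (PhiFun φ t)))
          ≤ ENNReal.ofReal c * (∫⁻ s in Set.Ioi (ψ (PhiFun φ η)), ENNReal.ofReal (KOker φinv f s))) ∧
      ((∃ η > (0:ℝ), (∫⁻ t in Set.Ioc (0:ℝ) η, ENNReal.ofReal (ψ (PhiFun φ t))) < ⊤) ↔
        (∫⁻ t in Set.Ioi (1:ℝ), ENNReal.ofReal (KOker φinv f t)) < ⊤) ∧
      ((∀ η > (0:ℝ), (∫⁻ t in Set.Ioc (0:ℝ) η, ENNReal.ofReal (ψ (PhiFun φ t))) < ⊤) ↔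
        (∫⁻ t in Set.Ioi (1:ℝ), ENNReal.ofReal (KOker φinv f t)) < ⊤) := by
  have hM : 0 < M := lt_of_lt_of_le hm hmM
  have hcont : Continuous f := hfC1.continuous
  have hfub : ∀ t > (0:ℝ), t * deriv f t ≤ (1 + M) * f t := fun t ht => (hfscal t ht).2
  have hφlb : ∀ t > (0:ℝ), c₀⁻¹ * (φ t / t) ≤ deriv φ t := fun t ht => (hφderiv t ht).1
  -- W facts
  have hWpos : ∀ t > (0:ℝ), 0 < Wfun f t :=
    fun t ht => KO.W_pos f hcont hfnn hfpos hWfin ht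
  have hWsa : ∀ a b : ℝ, 0 < a → a < b → Wfun f b < Wfun f a :=
    fun a b ha hab => KO.W_strictAnti f hcont hfnn hfpos hWfin ha hab
  have hWanti : ∀ a b : ℝ, 0 < a → a ≤ b → Wfun f b ≤ Wfun f a := by
    intro a b ha hab
    rcases eq_or_lt_of_le hab with rfl | hlt
    · exact le_rfl
    · exact (hWsa a b ha hlt).le
  -- ψ facts
  have hψanti : ∀ a b : ℝ, 0 < a → a ≤ b → ψ b ≤ ψ a := by
    intro a b ha hab
    by_contra hcon
    push_neg at hcon
    have h1 : Wfun f (ψ b) < Wfun f (ψ a) := hWsa _ _ (hψpos a ha) hcon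
    rw [hWψ a ha, hWψ b (lt_of_lt_of_le ha hab)] at h1
    exact absurd h1 (not_lt.mpr hab)
  have hψsa : ∀ a b : ℝ, 0 < a → a < b → ψ b < ψ a := by
    intro a b ha hab
    by_contra hcon
    push_neg at hcon
    have h1 : Wfun f (ψ b) ≤ Wfun f (ψ a) := hWanti _ _ (hψpos a ha) hcon
    rw [hWψ a ha, hWψ b (ha.trans hab)] at h1
    exact absurd h1 (not_le.mpr hab)
  -- Phi facts
  have hPhipos : ∀ t > (0:ℝ), 0 < PhiFun φ t := fun t ht => KO.Phi_pos φ hφpos ht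
  have hPhiSM : StrictMonoOn (PhiFun φ) (Set.Ioi 0) := KO.Phi_strictMono φ hφmono hφpos
  -- g and h facts
  have hgpos : ∀ t > (0:ℝ), 0 < ψ (PhiFun φ t) := fun t ht => hψpos _ (hPhipos t ht)
  have hgsa : StrictAntiOn (fun t => ψ (PhiFun φ t)) (Set.Ioi 0) := by
    intro a ha b hb hab
    exact hψsa _ _ (hPhipos a ha) (hPhiSM ha hb hab)
  have hHpos : ∀ s > (0:ℝ), 0 < KOker φinv f s := by
    intro s hs
    exact Real.rpow_pos_of_pos (hφinvpos _ (Real.rpow_pos_of_pos (hWpos s hs) _)) _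
  have hHG : ∀ t > (0:ℝ), KOker φinv f (ψ (PhiFun φ t)) = t := by
    intro t ht
    have ht2 : 0 < t ^ (-(2:ℝ)) := Real.rpow_pos_of_pos ht _
    have hφt : 0 < φ (t ^ (-(2:ℝ))) := hφpos _ ht2
    simp only [KOker]
    rw [hWψ _ (hPhipos t ht)]
    simp only [PhiFun]
    rw [KO.collapse₁ hφt, hφinv₁ _ ht2, KO.collapse₂ ht]
  have hGH : ∀ s > (0:ℝ), ψ (PhiFun φ (KOker φinv f s)) = s := by
    intro s hs
    have hWs : 0 < Wfun f s := hWpos s hs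
    have hW2 : 0 < (Wfun f s) ^ (-(2:ℝ)) := Real.rpow_pos_of_pos hWs _
    have hy : 0 < φinv ((Wfun f s) ^ (-(2:ℝ))) := hφinvpos _ hW2
    have h1 : PhiFun φ (KOker φinv f s) = Wfun f s := by
      simp only [PhiFun, KOker]
      rw [KO.collapse₁ hy, hφinv₂ _ hW2, KO.collapse₂ hWs]
    rw [h1]
    exact hψW s hs
  have hHsa : StrictAntiOn (KOker φinv f) (Set.Ioi 0) := by
    intro a ha b hb hab
    by_contra hcon
    push_neg at hcon
    have h1 := hgsa.antitoneOn (Set.mem_Ioi.mpr (hHpos a ha)) (Set.mem_Ioi.mpr (hHpos b hb)) hcon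
    rw [hGH a ha, hGH b hb] at h1
    exact absurd h1 (not_le.mpr hab)
  have hinv : ∀ t > (0:ℝ), ∀ s > (0:ℝ), (s < ψ (PhiFun φ t) ↔ t < KOker φinv f s) := by
    intro t ht s hs
    constructor
    · intro hlt
      have h1 := hHsa (Set.mem_Ioi.mpr hs) (Set.mem_Ioi.mpr (hgpos t ht)) hlt
      rwa [hHG t ht] at h1
    · intro hlt
      have h1 := hgsa (Set.mem_Ioi.mpr ht) (Set.mem_Ioi.mpr (hHpos s hs)) hlt
      simp only at h1
      rwa [hGH s hs] at h1
  -- constants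
  set C : ℝ := 8 * (4:ℝ) ^ (1+M) * (2:ℝ) ^ (1+M) with hCdef
  have hCpos : 0 < C := by
    rw [hCdef]; positivity
  set K : ℝ := 1 + C ^ ((1:ℝ)/2) / 2 with hKdef
  have hK1 : 1 ≤ K := by
    have := Real.rpow_nonneg hCpos.le ((1:ℝ)/2)
    rw [hKdef]; linarith
  have hKpos : 0 < K := lt_of_lt_of_le one_pos hK1
  set ε : ℝ := K ^ (-c₀) with hεdef
  have hεpos : 0 < ε := Real.rpow_pos_of_pos hKpos _
  have hε1 : ε ≤ 1 := Real.rpow_le_one_of_one_le_of_nonpos hK1 (by linarith)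
  have hεc : ε ^ (c₀⁻¹) = K⁻¹ := by
    rw [hεdef, ← Real.rpow_mul hKpos.le]
    rw [show -c₀ * c₀⁻¹ = -1 by field_simp]
    exact Real.rpow_neg_one K
  -- key doubling inequality
  have hkey : ∀ η > (0:ℝ), 2 * ψ (PhiFun φ η) ≤ ψ (PhiFun φ (ε * η)) := by
    intro η hη
    have ht : 0 < ψ (PhiFun φ η) := hgpos η hη
    set t : ℝ := ψ (PhiFun φ η) with htdef
    have hWt : Wfun f t = PhiFun φ η := hWψ _ (hPhipos η hη)
    have hWd := KO.W_double M hM f hcont hfnn hfpos hfC1 hfmono hfub hWfin ht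
    rw [← hCdef, ← hKdef] at hWd
    have hPs : PhiFun φ (ε * η) ≤ K⁻¹ * PhiFun φ η := by
      have h1 := KO.Phi_scale c₀ hc₀ φ hφpos hφC1 hφlb hη hεpos hε1
      rwa [hεc] at h1
    have hW2pos : 0 < Wfun f (2 * t) := hWpos _ (by linarith)
    have hlast : PhiFun φ (ε * η) ≤ Wfun f (2 * t) := by
      have h3 := mul_le_mul_of_nonneg_left hWd (inv_nonneg.mpr hKpos.le)
      rw [← mul_assoc, inv_mul_cancel₀ (ne_of_gt hKpos), one_mul] at h3
      calc PhiFun φ (ε * η) ≤ K⁻¹ * PhiFun φ η := hPs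
        _ = K⁻¹ * Wfun f t := by rw [hWt]
        _ ≤ Wfun f (2 * t) := h3
    have hfin := hψanti _ _ (hPhipos _ (by positivity)) hlast
    rwa [hψW (2 * t) (by linarith)] at hfin
  exact KO.final (fun t => ψ (PhiFun φ t)) (KOker φinv f) ε hεpos hε1
    hgsa hgpos hHpos hHG hHsa hinv hkey
end
end

section
/- Suppose there exist ε₀ > 0 and C₀ > 0 such that ∫₀^ε φ(u^{-2})^{1/m} du ≤ C₀·ε·φ(ε^{-2})^{1/m} for all ε ∈ (0, ε₀]. Then there exist R > 0 and C₁ > 0 such that for every r ≥ R the integral ∫_r^∞ (φ^{-1}(W(t)^{-2}))^{-1/2} dt is finite and satisfies ∫_r^∞ (φ^{-1}(W(t)^{-2}))^{-1/2} dt ≤ C₁·r·(φ^{-1}(W(r)^{-2}))^{-1/2}. -/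
open MeasureTheory Set Filter Topology

noncomputable section

/-- Auxiliary: `u(w) = (φ⁻¹(w^{-2}))^{-1/2}`, so that `KOker φinv f t = u (W t)`. -/
noncomputable def uFun (φinv : ℝ → ℝ) (w : ℝ) : ℝ := (φinv (w ^ (-(2:ℝ)))) ^ (-(1:ℝ)/2)

lemma KOker_eq_uFun (φinv f : ℝ → ℝ) (t : ℝ) : KOker φinv f t = uFun φinv (Wfun f t) := rfl

private lemma ratio_monoOn {g g' : ℝ → ℝ} (hg : ∀ x, 0 < x → HasDerivAt g (g' x) x)
    {c : ℝ} (h : ∀ x, 0 < x → c * g x ≤ x * g' x) :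
    MonotoneOn (fun x => g x * x ^ (-c)) (Set.Ioi (0:ℝ)) := by
  have key : ∀ x, 0 < x → HasDerivAt (fun x => g x * x ^ (-c))
      (g' x * x ^ (-c) + g x * (-c * x ^ (-c - 1))) x := fun x hx =>
    (hg x hx).mul (Real.hasDerivAt_rpow_const (Or.inl hx.ne'))
  apply monotoneOn_of_deriv_nonneg (convex_Ioi 0)
  · exact fun x hx => ((key x hx).differentiableAt).continuousAt.continuousWithinAt
  · rw [interior_Ioi]
    exact fun x hx => (key x hx).differentiableAt.differentiableWithinAt
  · rw [interior_Ioi]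
    intro x hx
    rw [(key x hx).deriv]
    have hx' : (0:ℝ) < x := hx
    have hA : (0:ℝ) < x ^ (-c - 1) := Real.rpow_pos_of_pos hx' _
    have h1 : x ^ (-c) = x ^ (-c - 1) * x := by
      rw [← Real.rpow_add_one hx'.ne' (-c - 1)]; ring_nf
    rw [h1]
    nlinarith [mul_nonneg hA.le (sub_nonneg.2 (h x hx'))]

private lemma ratio_antiOn {g g' : ℝ → ℝ} (hg : ∀ x, 0 < x → HasDerivAt g (g' x) x)
    {c : ℝ} (h : ∀ x, 0 < x → x * g' x ≤ c * g x) :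
    AntitoneOn (fun x => g x * x ^ (-c)) (Set.Ioi (0:ℝ)) := by
  have key : ∀ x, 0 < x → HasDerivAt (fun x => g x * x ^ (-c))
      (g' x * x ^ (-c) + g x * (-c * x ^ (-c - 1))) x := fun x hx =>
    (hg x hx).mul (Real.hasDerivAt_rpow_const (Or.inl hx.ne'))
  apply antitoneOn_of_deriv_nonpos (convex_Ioi 0)
  · exact fun x hx => ((key x hx).differentiableAt).continuousAt.continuousWithinAt
  · rw [interior_Ioi]
    exact fun x hx => (key x hx).differentiableAt.differentiableWithinAt
  · rw [interior_Ioi]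
    intro x hx
    rw [(key x hx).deriv]
    have hx' : (0:ℝ) < x := hx
    have hA : (0:ℝ) < x ^ (-c - 1) := Real.rpow_pos_of_pos hx' _
    have h1 : x ^ (-c) = x ^ (-c - 1) * x := by
      rw [← Real.rpow_add_one hx'.ne' (-c - 1)]; ring_nf
    rw [h1]
    nlinarith [mul_nonneg hA.le (sub_nonneg.2 (h x hx'))]

private lemma ratio_le {g g' : ℝ → ℝ} (hg : ∀ x, 0 < x → HasDerivAt g (g' x) x)
    {c : ℝ} (h : ∀ x, 0 < x → c * g x ≤ x * g' x)
    {t s : ℝ} (ht : 0 < t) (hts : t ≤ s) :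
    g t * (s / t) ^ c ≤ g s := by
  have hs : 0 < s := lt_of_lt_of_le ht hts
  have H := ratio_monoOn hg h ht (mem_Ioi.2 hs) hts
  simp only at H
  have hsc : (0:ℝ) < s ^ c := Real.rpow_pos_of_pos hs _
  have hdiv : (s / t) ^ c = s ^ c * t ^ (-c) := by
    rw [Real.div_rpow hs.le ht.le, Real.rpow_neg ht.le, div_eq_mul_inv]
  have hss : s ^ (-c) * s ^ c = 1 := by
    rw [← Real.rpow_add hs]; simp
  calc g t * (s / t) ^ c = (g t * t ^ (-c)) * s ^ c := by rw [hdiv]; ring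
    _ ≤ (g s * s ^ (-c)) * s ^ c := mul_le_mul_of_nonneg_right H hsc.le
    _ = g s := by rw [mul_assoc, hss, mul_one]

private lemma ratio_ge {g g' : ℝ → ℝ} (hg : ∀ x, 0 < x → HasDerivAt g (g' x) x)
    {c : ℝ} (h : ∀ x, 0 < x → x * g' x ≤ c * g x)
    {t s : ℝ} (ht : 0 < t) (hts : t ≤ s) :
    g s ≤ g t * (s / t) ^ c := by
  have hs : 0 < s := lt_of_lt_of_le ht hts
  have H := ratio_antiOn hg h ht (mem_Ioi.2 hs) hts
  simp only at H
  have hsc : (0:ℝ) < s ^ c := Real.rpow_pos_of_pos hs _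
  have hdiv : (s / t) ^ c = s ^ c * t ^ (-c) := by
    rw [Real.div_rpow hs.le ht.le, Real.rpow_neg ht.le, div_eq_mul_inv]
  have hss : s ^ (-c) * s ^ c = 1 := by
    rw [← Real.rpow_add hs]; simp
  calc g s = (g s * s ^ (-c)) * s ^ c := by rw [mul_assoc, hss, mul_one]
    _ ≤ (g t * t ^ (-c)) * s ^ c := mul_le_mul_of_nonneg_right H hsc.le
    _ = g t * (s / t) ^ c := by rw [hdiv]; ring

private lemma Fint_hasDerivAt {f : ℝ → ℝ} (hf : Continuous f) (x : ℝ) :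
    HasDerivAt (Fint f) (f x) x := (hf.integral_hasStrictDerivAt 0 x).hasDerivAt

private lemma Fint_le_aux {f : ℝ → ℝ} {c t : ℝ} (hc : 0 < c) (ht : 0 < t)
    (hf : Continuous f)
    (hpt : ∀ s ∈ Set.Icc 0 t, f s ≤ (f t / t ^ (1+c)) * s ^ (1+c)) :
    (2 + c) * Fint f t ≤ t * f t := by
  have h1 : Fint f t ≤ ∫ s in (0:ℝ)..t, (f t / t ^ (1+c)) * s ^ (1+c) := by
    apply intervalIntegral.integral_mono_on ht.le (hf.intervalIntegrable 0 t)
      ((intervalIntegral.intervalIntegrable_rpow' (by linarith)).const_mul _)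
    exact hpt
  have h2 : ∫ s in (0:ℝ)..t, (f t / t ^ (1+c)) * s ^ (1+c)
      = (f t / t ^ (1+c)) * ((t ^ (1+c+1) - (0:ℝ) ^ (1+c+1)) / (1+c+1)) := by
    rw [intervalIntegral.integral_const_mul, integral_rpow (Or.inl (by linarith))]
  have h3 : (0:ℝ) ^ (1+c+1) = 0 := Real.zero_rpow (by positivity)
  have h4 : t ^ (1+c+1) = t ^ (1+c) * t := by
    rw [Real.rpow_add_one ht.ne' (1+c)]
  have htc : (0:ℝ) < t ^ (1+c) := Real.rpow_pos_of_pos ht _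
  rw [h2, h3, h4] at h1
  have := mul_le_mul_of_nonneg_left h1 (by linarith : (0:ℝ) ≤ 2 + c)
  calc (2+c) * Fint f t ≤ (2+c) * ((f t / t ^ (1+c)) * ((t ^ (1+c) * t - 0) / (1+c+1))) := this
    _ = t * f t := by field_simp; ring

private lemma Fint_ge_aux {f : ℝ → ℝ} {c t : ℝ} (hc : 0 < c) (ht : 0 < t)
    (hf : Continuous f)
    (hpt : ∀ s ∈ Set.Icc 0 t, (f t / t ^ (1+c)) * s ^ (1+c) ≤ f s) :
    t * f t ≤ (2 + c) * Fint f t := by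
  have h1 : (∫ s in (0:ℝ)..t, (f t / t ^ (1+c)) * s ^ (1+c)) ≤ Fint f t := by
    apply intervalIntegral.integral_mono_on ht.le
      ((intervalIntegral.intervalIntegrable_rpow' (by linarith)).const_mul _)
      (hf.intervalIntegrable 0 t)
    exact hpt
  have h2 : ∫ s in (0:ℝ)..t, (f t / t ^ (1+c)) * s ^ (1+c)
      = (f t / t ^ (1+c)) * ((t ^ (1+c+1) - (0:ℝ) ^ (1+c+1)) / (1+c+1)) := by
    rw [intervalIntegral.integral_const_mul, integral_rpow (Or.inl (by linarith))]
  have h3 : (0:ℝ) ^ (1+c+1) = 0 := Real.zero_rpow (by positivity)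
  have h4 : t ^ (1+c+1) = t ^ (1+c) * t := by
    rw [Real.rpow_add_one ht.ne' (1+c)]
  have htc : (0:ℝ) < t ^ (1+c) := Real.rpow_pos_of_pos ht _
  rw [h2, h3, h4] at h1
  have := mul_le_mul_of_nonneg_left h1 (by linarith : (0:ℝ) ≤ 2 + c)
  calc t * f t = (2+c) * ((f t / t ^ (1+c)) * ((t ^ (1+c) * t - 0) / (1+c+1))) := by
        field_simp; ring
    _ ≤ (2+c) * Fint f t := this

private lemma W_upper {f : ℝ → ℝ} {m t : ℝ} (hm : 0 < m) (ht : 0 < t)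
    (hFt : 0 < Fint f t)
    (hF : ∀ s, t ≤ s → Fint f t * (s/t) ^ (2+m) ≤ Fint f s)
    (hint : IntegrableOn (fun s => (Fint f s) ^ (-(1:ℝ)/2)) (Set.Ioi t)) :
    Wfun f t ≤ (2/m) * t * (Fint f t) ^ (-(1:ℝ)/2) := by
  set e : ℝ := -((2+m)/2) with he
  have helt : e < -1 := by rw [he]; linarith
  set c : ℝ := (Fint f t) ^ (-(1:ℝ)/2) * t ^ ((2+m)/2) with hc
  have hcomp : ∀ σ ∈ Set.Ioi t, (Fint f σ) ^ (-(1:ℝ)/2) ≤ c * σ ^ e := by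
    intro σ hσ
    have hσt : t < σ := hσ
    have hσ0 : 0 < σ := ht.trans hσt
    have hq : 0 < (σ/t) ^ (2+m) := Real.rpow_pos_of_pos (by positivity) _
    have hB : 0 < Fint f t * (σ/t) ^ (2+m) := by positivity
    have h1 : (Fint f σ) ^ (-(1:ℝ)/2) ≤ (Fint f t * (σ/t) ^ (2+m)) ^ (-(1:ℝ)/2) :=
      Real.rpow_le_rpow_of_nonpos hB (hF σ hσt.le) (by norm_num)
    have h2 : (Fint f t * (σ/t) ^ (2+m)) ^ (-(1:ℝ)/2)
        = (Fint f t) ^ (-(1:ℝ)/2) * ((σ/t) ^ (2+m)) ^ (-(1:ℝ)/2) :=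
      Real.mul_rpow hFt.le hq.le
    have h3 : ((σ/t) ^ (2+m)) ^ (-(1:ℝ)/2) = (σ/t) ^ e := by
      rw [← Real.rpow_mul (by positivity)]; norm_num [he]; ring_nf
    have h4 : (σ/t) ^ e = σ ^ e * t ^ ((2+m)/2) := by
      rw [Real.div_rpow hσ0.le ht.le, div_eq_mul_inv, ← Real.rpow_neg ht.le]
      norm_num [he]
    calc (Fint f σ) ^ (-(1:ℝ)/2) ≤ (Fint f t * (σ/t) ^ (2+m)) ^ (-(1:ℝ)/2) := h1
      _ = c * σ ^ e := by rw [h2, h3, h4, hc]; ring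
  have hint2 : IntegrableOn (fun σ => c * σ ^ e) (Set.Ioi t) :=
    (integrableOn_Ioi_rpow_of_lt helt ht).const_mul c
  have hW : Wfun f t ≤ ∫ σ in Set.Ioi t, c * σ ^ e :=
    setIntegral_mono_on hint hint2 measurableSet_Ioi hcomp
  have hI : ∫ σ in Set.Ioi t, c * σ ^ e = c * (-t ^ (e+1) / (e+1)) := by
    rw [MeasureTheory.integral_const_mul, integral_Ioi_rpow_of_lt helt ht]
  rw [hI] at hW
  refine hW.trans_eq ?_
  have h6 : (2+m)/2 + (e+1) = 1 := by rw [he]; ring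
  have h5 : t ^ ((2+m)/2) * t ^ (e+1) = t := by
    rw [← Real.rpow_add ht, h6, Real.rpow_one]
  have h7 : e + 1 = -(m/2) := by rw [he]; ring
  rw [hc]
  calc (Fint f t) ^ (-(1:ℝ)/2) * t ^ ((2+m)/2) * (-t ^ (e+1) / (e+1))
      = (Fint f t) ^ (-(1:ℝ)/2) * (t ^ ((2+m)/2) * t ^ (e+1)) * (-1 / (e+1)) := by ring
    _ = (2/m) * t * (Fint f t) ^ (-(1:ℝ)/2) := by
        rw [h5, h7]; field_simp

private lemma W_lower {f : ℝ → ℝ} {M t : ℝ} (hM : 0 < M) (ht : 0 < t)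
    (hFt : 0 < Fint f t) (hFpos : ∀ s, t ≤ s → 0 < Fint f s)
    (hF : ∀ s, t ≤ s → Fint f s ≤ Fint f t * (s/t) ^ (2+M))
    (hint : IntegrableOn (fun s => (Fint f s) ^ (-(1:ℝ)/2)) (Set.Ioi t)) :
    (2/M) * t * (Fint f t) ^ (-(1:ℝ)/2) ≤ Wfun f t := by
  set e : ℝ := -((2+M)/2) with he
  have helt : e < -1 := by rw [he]; linarith
  set c : ℝ := (Fint f t) ^ (-(1:ℝ)/2) * t ^ ((2+M)/2) with hc
  have hcomp : ∀ σ ∈ Set.Ioi t, c * σ ^ e ≤ (Fint f σ) ^ (-(1:ℝ)/2) := by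
    intro σ hσ
    have hσt : t < σ := hσ
    have hσ0 : 0 < σ := ht.trans hσt
    have hq : 0 < (σ/t) ^ (2+M) := Real.rpow_pos_of_pos (by positivity) _
    have hFσ : 0 < Fint f σ := hFpos σ hσt.le
    have h1 : (Fint f t * (σ/t) ^ (2+M)) ^ (-(1:ℝ)/2) ≤ (Fint f σ) ^ (-(1:ℝ)/2) :=
      Real.rpow_le_rpow_of_nonpos hFσ (hF σ hσt.le) (by norm_num)
    have h2 : (Fint f t * (σ/t) ^ (2+M)) ^ (-(1:ℝ)/2)
        = (Fint f t) ^ (-(1:ℝ)/2) * ((σ/t) ^ (2+M)) ^ (-(1:ℝ)/2) :=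
      Real.mul_rpow hFt.le hq.le
    have h3 : ((σ/t) ^ (2+M)) ^ (-(1:ℝ)/2) = (σ/t) ^ e := by
      rw [← Real.rpow_mul (by positivity)]; norm_num [he]; ring_nf
    have h4 : (σ/t) ^ e = σ ^ e * t ^ ((2+M)/2) := by
      rw [Real.div_rpow hσ0.le ht.le, div_eq_mul_inv, ← Real.rpow_neg ht.le]
      norm_num [he]
    calc c * σ ^ e = (Fint f t * (σ/t) ^ (2+M)) ^ (-(1:ℝ)/2) := by
          rw [h2, h3, h4, hc]; ring
      _ ≤ (Fint f σ) ^ (-(1:ℝ)/2) := h1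
  have hint2 : IntegrableOn (fun σ => c * σ ^ e) (Set.Ioi t) :=
    (integrableOn_Ioi_rpow_of_lt helt ht).const_mul c
  have hW : (∫ σ in Set.Ioi t, c * σ ^ e) ≤ Wfun f t :=
    setIntegral_mono_on hint2 hint measurableSet_Ioi hcomp
  have hI : ∫ σ in Set.Ioi t, c * σ ^ e = c * (-t ^ (e+1) / (e+1)) := by
    rw [MeasureTheory.integral_const_mul, integral_Ioi_rpow_of_lt helt ht]
  rw [hI] at hW
  refine le_trans (le_of_eq ?_) hW
  have h6 : (2+M)/2 + (e+1) = 1 := by rw [he]; ring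
  have h5 : t ^ ((2+M)/2) * t ^ (e+1) = t := by
    rw [← Real.rpow_add ht, h6, Real.rpow_one]
  have h7 : e + 1 = -(M/2) := by rw [he]; ring
  rw [hc]
  calc (2/M) * t * (Fint f t) ^ (-(1:ℝ)/2)
      = (Fint f t) ^ (-(1:ℝ)/2) * (t ^ ((2+M)/2) * t ^ (e+1)) * (-1 / (e+1)) := by
        rw [h5, h7]; field_simp
    _ = (Fint f t) ^ (-(1:ℝ)/2) * t ^ ((2+M)/2) * (-t ^ (e+1) / (e+1)) := by ring

/-- Under the condition `∫₀^ε φ(u^{-2})^{1/m} du ≲ ε·φ(ε^{-2})^{1/m}`, the refined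
Keller–Osserman condition holds: `∫_r^∞ (φ^{-1}(W(t)^{-2}))^{-1/2} dt ≤ C₁·r·(φ^{-1}(W(r)^{-2}))^{-1/2}`
for all large `r`. -/
theorem refined_keller_osserman_from_kato_condition
    (m M : ℝ) (hm : 0 < m) (hmM : m ≤ M)
    (f : ℝ → ℝ) (hf0 : f 0 = 0) (hfnn : ∀ t, 0 ≤ f t) (hfpos : ∀ t > 0, 0 < f t)
    (hfC1 : ContDiff ℝ 1 f) (hfmono : Monotone f)
    (hfscal : ∀ t > 0, (1 + m) * f t ≤ t * deriv f t ∧ t * deriv f t ≤ (1 + M) * f t)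
    (hWfin : ∀ t > 0, IntegrableOn (fun s => (Fint f s) ^ (-(1:ℝ)/2)) (Set.Ioi t))
    (ψ : ℝ → ℝ) (hψpos : ∀ t > 0, 0 < ψ t)
    (hψW : ∀ t > 0, ψ (Wfun f t) = t) (hWψ : ∀ t > 0, Wfun f (ψ t) = t)
    (c₀ : ℝ) (hc₀ : 1 ≤ c₀)
    (φ : ℝ → ℝ) (hφpos : ∀ t > 0, 0 < φ t) (hφmono : StrictMonoOn φ (Set.Ioi 0))
    (hφC1 : ContDiffOn ℝ 1 φ (Set.Ioi 0))
    (hφderiv : ∀ t > 0, c₀⁻¹ * (φ t / t) ≤ deriv φ t ∧ deriv φ t ≤ c₀ * (φ t / t))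
    (φinv : ℝ → ℝ) (hφinvpos : ∀ t > 0, 0 < φinv t)
    (hφinv₁ : ∀ t > 0, φinv (φ t) = t) (hφinv₂ : ∀ t > 0, φ (φinv t) = t)
    (ε₀ C₀ : ℝ) (hε₀ : 0 < ε₀) (hC₀ : 0 < C₀)
    (hkato : ∀ ε ∈ Set.Ioc (0:ℝ) ε₀,
      (∫⁻ s in Set.Ioc (0:ℝ) ε, ENNReal.ofReal ((φ (s ^ (-(2:ℝ)))) ^ (1/m)))
        ≤ ENNReal.ofReal (C₀ * ε * (φ (ε ^ (-(2:ℝ)))) ^ (1/m))) :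
    ∃ R > (0:ℝ), ∃ C₁ > (0:ℝ), ∀ r ≥ R,
      IntegrableOn (fun t => KOker φinv f t) (Set.Ioi r) ∧
      (∫ t in Set.Ioi r, KOker φinv f t) ≤ C₁ * r * KOker φinv f r := by
  have hM : 0 < M := lt_of_lt_of_le hm hmM
  have hfd : ∀ x : ℝ, 0 < x → HasDerivAt f (deriv f x) x :=
    fun x _ => (hfC1.differentiable one_ne_zero x).hasDerivAt
  have hfc : Continuous f := hfC1.continuous
  -- growth bounds for f
  have hflow : ∀ t s : ℝ, 0 < t → t ≤ s → f t * (s/t) ^ (1+m) ≤ f s :=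
    fun t s ht hts => ratio_le hfd (fun x hx => (hfscal x hx).1) ht hts
  have hfhigh : ∀ t s : ℝ, 0 < t → t ≤ s → f s ≤ f t * (s/t) ^ (1+M) :=
    fun t s ht hts => ratio_ge hfd (fun x hx => (hfscal x hx).2) ht hts
  -- pointwise comparisons for the integral giving F bounds
  have hkey_le : ∀ t : ℝ, 0 < t → ∀ s ∈ Set.Icc (0:ℝ) t, f s ≤ (f t / t ^ (1+m)) * s ^ (1+m) := by
    intro t ht s hs
    rcases eq_or_lt_of_le hs.1 with h0 | h0
    · rw [← h0, hf0, Real.zero_rpow (by positivity : (1:ℝ)+m ≠ 0), mul_zero]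
    · have h1 := hflow s t h0 hs.2
      have ha : (0:ℝ) < s ^ (1+m) := Real.rpow_pos_of_pos h0 _
      have hb : (0:ℝ) < t ^ (1+m) := Real.rpow_pos_of_pos ht _
      have hdiv : (t/s) ^ ((1:ℝ)+m) = t ^ ((1:ℝ)+m) / s ^ ((1:ℝ)+m) :=
        Real.div_rpow ht.le h0.le _
      rw [hdiv] at h1
      rw [div_mul_eq_mul_div, le_div_iff₀ hb]
      calc f s * t ^ (1+m) = (f s * (t ^ ((1:ℝ)+m) / s ^ ((1:ℝ)+m))) * s ^ (1+m) := by
            field_simp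
        _ ≤ f t * s ^ (1+m) := mul_le_mul_of_nonneg_right h1 ha.le
  have hkey_ge : ∀ t : ℝ, 0 < t → ∀ s ∈ Set.Icc (0:ℝ) t, (f t / t ^ (1+M)) * s ^ (1+M) ≤ f s := by
    intro t ht s hs
    rcases eq_or_lt_of_le hs.1 with h0 | h0
    · rw [← h0, Real.zero_rpow (by positivity : (1:ℝ)+M ≠ 0), mul_zero]
      exact hfnn 0
    · have h1 := hfhigh s t h0 hs.2
      have ha : (0:ℝ) < s ^ (1+M) := Real.rpow_pos_of_pos h0 _
      have hb : (0:ℝ) < t ^ (1+M) := Real.rpow_pos_of_pos ht _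
      have hdiv : (t/s) ^ ((1:ℝ)+M) = t ^ ((1:ℝ)+M) / s ^ ((1:ℝ)+M) :=
        Real.div_rpow ht.le h0.le _
      rw [hdiv] at h1
      rw [div_mul_eq_mul_div, div_le_iff₀ hb]
      calc f t * s ^ (1+M) ≤ (f s * (t ^ ((1:ℝ)+M) / s ^ ((1:ℝ)+M))) * s ^ (1+M) :=
            mul_le_mul_of_nonneg_right h1 ha.le
        _ = f s * t ^ (1+M) := by field_simp
  -- F bounds
  have hFlow : ∀ t : ℝ, 0 < t → (2+m) * Fint f t ≤ t * f t :=
    fun t ht => Fint_le_aux hm ht hfc (hkey_le t ht)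
  have hFub : ∀ t : ℝ, 0 < t → t * f t ≤ (2+M) * Fint f t :=
    fun t ht => Fint_ge_aux hM ht hfc (hkey_ge t ht)
  have hFpos : ∀ t : ℝ, 0 < t → 0 < Fint f t := by
    intro t ht
    have h1 := hFub t ht
    have h2 : 0 < t * f t := mul_pos ht (hfpos t ht)
    nlinarith
  have hFd : ∀ x : ℝ, 0 < x → HasDerivAt (Fint f) (f x) x := fun x _ => Fint_hasDerivAt hfc x
  have hF3low : ∀ t s : ℝ, 0 < t → t ≤ s → Fint f t * (s/t) ^ (2+m) ≤ Fint f s :=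
    fun t s ht hts => ratio_le hFd (fun x hx => hFlow x hx) ht hts
  have hF3high : ∀ t s : ℝ, 0 < t → t ≤ s → Fint f s ≤ Fint f t * (s/t) ^ (2+M) :=
    fun t s ht hts => ratio_ge hFd (fun x hx => hFub x hx) ht hts
  -- W bounds
  have hWub : ∀ t : ℝ, 0 < t → Wfun f t ≤ (2/m) * t * (Fint f t) ^ (-(1:ℝ)/2) :=
    fun t ht => W_upper hm ht (hFpos t ht) (fun s hs => hF3low t s ht hs) (hWfin t ht)
  have hWlb : ∀ t : ℝ, 0 < t → (2/M) * t * (Fint f t) ^ (-(1:ℝ)/2) ≤ Wfun f t :=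
    fun t ht => W_lower hM ht (hFpos t ht) (fun s hs => hFpos s (lt_of_lt_of_le ht hs))
      (fun s hs => hF3high t s ht hs) (hWfin t ht)
  have hWpos : ∀ t : ℝ, 0 < t → 0 < Wfun f t := by
    intro t ht
    have h1 := hWlb t ht
    have h2 : 0 < (2/M) * t * (Fint f t) ^ (-(1:ℝ)/2) := by
      have := hFpos t ht; positivity
    linarith
  have hWanti : ∀ a b : ℝ, 0 < a → a ≤ b → Wfun f b ≤ Wfun f a := by
    intro a b ha hab
    apply setIntegral_mono_set (hWfin a ha)
    · filter_upwards [ae_restrict_mem measurableSet_Ioi] with s hs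
      exact (Real.rpow_pos_of_pos (hFpos s (ha.trans hs)) _).le
    · exact HasSubset.Subset.eventuallyLE (Ioi_subset_Ioi hab)
  -- decay of W
  have hWdecay : ∀ t s : ℝ, 0 < t → t ≤ s → Wfun f s * (s/t) ^ (m/2) ≤ (M/m) * Wfun f t := by
    intro t s ht hts
    have hs : 0 < s := lt_of_lt_of_le ht hts
    have hFt := hFpos t ht
    have hFs := hFpos s hs
    have hst : (0:ℝ) < s / t := by positivity
    have hq : (0:ℝ) < (s/t) ^ ((2:ℝ)+m) := Real.rpow_pos_of_pos hst _
    have h1 : (Fint f s) ^ (-(1:ℝ)/2) ≤ (Fint f t * (s/t) ^ (2+m)) ^ (-(1:ℝ)/2) :=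
      Real.rpow_le_rpow_of_nonpos (by positivity) (hF3low t s ht hts) (by norm_num)
    have h2 : (Fint f t * (s/t) ^ (2+m)) ^ (-(1:ℝ)/2)
        = (Fint f t) ^ (-(1:ℝ)/2) * ((s/t) ^ ((2:ℝ)+m)) ^ (-(1:ℝ)/2) := Real.mul_rpow hFt.le hq.le
    have h3 : ((s/t) ^ ((2:ℝ)+m)) ^ (-(1:ℝ)/2) = (s/t) ^ (-((2+m)/2)) := by
      rw [← Real.rpow_mul hst.le]; ring_nf
    have hrr : (s/t) ^ (-(((2:ℝ)+m)/2)) * (s/t) ^ (m/2) = t / s := by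
      rw [← Real.rpow_add hst]
      have he : -(((2:ℝ)+m)/2) + m/2 = -1 := by ring
      rw [he, Real.rpow_neg_one, inv_div]
    have hWs := hWub s hs
    have hps : (0:ℝ) ≤ (s/t) ^ (m/2) := (Real.rpow_pos_of_pos hst _).le
    have hstep : Wfun f s * (s/t) ^ (m/2) ≤ (2/m) * t * (Fint f t) ^ (-(1:ℝ)/2) := by
      have hmid : (Fint f s) ^ (-(1:ℝ)/2)
          ≤ (Fint f t) ^ (-(1:ℝ)/2) * (s/t) ^ (-((2+m)/2)) := by
        rw [← h3, ← h2]; exact h1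
      calc Wfun f s * (s/t) ^ (m/2)
          ≤ ((2/m) * s * (Fint f s) ^ (-(1:ℝ)/2)) * (s/t) ^ (m/2) :=
            mul_le_mul_of_nonneg_right hWs hps
        _ ≤ ((2/m) * s * ((Fint f t) ^ (-(1:ℝ)/2) * (s/t) ^ (-((2+m)/2)))) * (s/t) ^ (m/2) := by
            apply mul_le_mul_of_nonneg_right _ hps
            apply mul_le_mul_of_nonneg_left hmid (by positivity)
        _ = (2/m) * s * (Fint f t) ^ (-(1:ℝ)/2) * ((s/t) ^ (-(((2:ℝ)+m)/2)) * (s/t) ^ (m/2)) := by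
            ring
        _ = (2/m) * s * (Fint f t) ^ (-(1:ℝ)/2) * (t/s) := by rw [hrr]
        _ = (2/m) * t * (Fint f t) ^ (-(1:ℝ)/2) := by field_simp
    calc Wfun f s * (s/t) ^ (m/2) ≤ (2/m) * t * (Fint f t) ^ (-(1:ℝ)/2) := hstep
      _ = (M/m) * ((2/M) * t * (Fint f t) ^ (-(1:ℝ)/2)) := by field_simp
      _ ≤ (M/m) * Wfun f t := mul_le_mul_of_nonneg_left (hWlb t ht) (by positivity)
  -- properties of u and v := PhiFun φ
  have hrpow_neg2 : ∀ x : ℝ, 0 < x → (0:ℝ) < x ^ (-(2:ℝ)) :=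
    fun x hx => Real.rpow_pos_of_pos hx _
  have hφinv_mono : ∀ a b : ℝ, 0 < a → a ≤ b → φinv a ≤ φinv b := by
    intro a b ha hab
    by_contra h
    push_neg at h
    have h2 := hφmono (mem_Ioi.2 (hφinvpos b (lt_of_lt_of_le ha hab))) (mem_Ioi.2 (hφinvpos a ha)) h
    rw [hφinv₂ a ha, hφinv₂ b (lt_of_lt_of_le ha hab)] at h2
    exact absurd h2 (not_lt.2 hab)
  have hu_pos : ∀ w : ℝ, 0 < w → 0 < uFun φinv w := fun w hw =>
    Real.rpow_pos_of_pos (hφinvpos _ (hrpow_neg2 w hw)) _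
  have hv_pos : ∀ ε : ℝ, 0 < ε → 0 < PhiFun φ ε := fun ε hε =>
    Real.rpow_pos_of_pos (hφpos _ (hrpow_neg2 ε hε)) _
  have hu_mono : ∀ w₁ w₂ : ℝ, 0 < w₁ → w₁ ≤ w₂ → uFun φinv w₁ ≤ uFun φinv w₂ := by
    intro w₁ w₂ h1 h12
    have ha : (0:ℝ) < w₂ ^ (-(2:ℝ)) := hrpow_neg2 _ (lt_of_lt_of_le h1 h12)
    have hle : w₂ ^ (-(2:ℝ)) ≤ w₁ ^ (-(2:ℝ)) :=
      Real.rpow_le_rpow_of_nonpos h1 h12 (by norm_num)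
    have h2 : φinv (w₂ ^ (-(2:ℝ))) ≤ φinv (w₁ ^ (-(2:ℝ))) := hφinv_mono _ _ ha hle
    exact Real.rpow_le_rpow_of_nonpos (hφinvpos _ ha) h2 (by norm_num)
  have hφ_mono : ∀ a b : ℝ, 0 < a → a ≤ b → φ a ≤ φ b := by
    intro a b ha hab
    rcases eq_or_lt_of_le hab with h | h
    · rw [h]
    · exact (hφmono (mem_Ioi.2 ha) (mem_Ioi.2 (lt_of_lt_of_le ha hab)) h).le
  have hv_mono : ∀ e1 e2 : ℝ, 0 < e1 → e1 ≤ e2 → PhiFun φ e1 ≤ PhiFun φ e2 := by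
    intro e1 e2 h1 h12
    have ha : (0:ℝ) < e2 ^ (-(2:ℝ)) := hrpow_neg2 _ (lt_of_lt_of_le h1 h12)
    have hle : e2 ^ (-(2:ℝ)) ≤ e1 ^ (-(2:ℝ)) :=
      Real.rpow_le_rpow_of_nonpos h1 h12 (by norm_num)
    have h2 : φ (e2 ^ (-(2:ℝ))) ≤ φ (e1 ^ (-(2:ℝ))) := hφ_mono _ _ ha hle
    exact Real.rpow_le_rpow_of_nonpos (hφpos _ ha) h2 (by norm_num)
  have hinv_sq : ∀ x : ℝ, 0 < x → (x ^ (-(1:ℝ)/2)) ^ (-(2:ℝ)) = x := by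
    intro x hx
    rw [← Real.rpow_mul hx.le]; norm_num
  have hsq_inv : ∀ x : ℝ, 0 < x → (x ^ (-(2:ℝ))) ^ (-(1:ℝ)/2) = x := by
    intro x hx
    rw [← Real.rpow_mul hx.le]; norm_num
  have huv : ∀ ε : ℝ, 0 < ε → uFun φinv (PhiFun φ ε) = ε := by
    intro ε hε
    have ha : (0:ℝ) < φ (ε ^ (-(2:ℝ))) := hφpos _ (hrpow_neg2 ε hε)
    show (φinv (((φ (ε ^ (-(2:ℝ)))) ^ (-(1:ℝ)/2)) ^ (-(2:ℝ)))) ^ (-(1:ℝ)/2) = ε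
    rw [hinv_sq _ ha, hφinv₁ _ (hrpow_neg2 ε hε), hsq_inv ε hε]
  have hvu : ∀ w : ℝ, 0 < w → PhiFun φ (uFun φinv w) = w := by
    intro w hw
    have ha : (0:ℝ) < φinv (w ^ (-(2:ℝ))) := hφinvpos _ (hrpow_neg2 w hw)
    show (φ (((φinv (w ^ (-(2:ℝ)))) ^ (-(1:ℝ)/2)) ^ (-(2:ℝ)))) ^ (-(1:ℝ)/2) = w
    rw [hinv_sq _ ha, hφinv₂ _ (hrpow_neg2 w hw), hsq_inv w hw]
  -- choice of R
  have hF1 : 0 < Fint f 1 := hFpos 1 one_pos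
  set v₀ : ℝ := PhiFun φ ε₀ with hv₀_def
  have hv₀ : 0 < v₀ := hv_pos ε₀ hε₀
  set A : ℝ := ((2/m) * (Fint f 1) ^ (-(1:ℝ)/2)) / v₀ with hA_def
  have hA : 0 < A := by
    have h1 : (0:ℝ) < (Fint f 1) ^ (-(1:ℝ)/2) := Real.rpow_pos_of_pos hF1 _
    rw [hA_def]; positivity
  set R : ℝ := max 1 (A ^ ((2:ℝ)/m)) with hR_def
  have hR1 : (1:ℝ) ≤ R := le_max_left _ _
  have hR0 : (0:ℝ) < R := lt_of_lt_of_le one_pos hR1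
  have hWR : ∀ r : ℝ, R ≤ r → Wfun f r ≤ v₀ := by
    intro r hr
    have hr1 : (1:ℝ) ≤ r := hR1.trans hr
    have hr0 : (0:ℝ) < r := lt_of_lt_of_le one_pos hr1
    have h1 : Wfun f r ≤ (2/m) * r * (Fint f r) ^ (-(1:ℝ)/2) := hWub r hr0
    have h2 : Fint f 1 * (r/1) ^ (2+m) ≤ Fint f r := hF3low 1 r one_pos hr1
    rw [div_one] at h2
    have hrp : (0:ℝ) < r ^ ((2:ℝ)+m) := Real.rpow_pos_of_pos hr0 _
    have h3 : (Fint f r) ^ (-(1:ℝ)/2) ≤ (Fint f 1 * r ^ (2+m)) ^ (-(1:ℝ)/2) :=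
      Real.rpow_le_rpow_of_nonpos (by positivity) h2 (by norm_num)
    have h4 : (Fint f 1 * r ^ ((2:ℝ)+m)) ^ (-(1:ℝ)/2)
        = (Fint f 1) ^ (-(1:ℝ)/2) * r ^ (-((2+m)/2)) := by
      rw [Real.mul_rpow hF1.le hrp.le, ← Real.rpow_mul hr0.le]; ring_nf
    have h5 : r * r ^ (-(((2:ℝ)+m)/2)) = r ^ (-(m/2)) := by
      have he : -(m/2) = 1 + (-(((2:ℝ)+m)/2)) := by ring
      rw [he, Real.rpow_add hr0, Real.rpow_one]
    have h6 : Wfun f r ≤ (2/m) * (Fint f 1) ^ (-(1:ℝ)/2) * r ^ (-(m/2)) := by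
      calc Wfun f r ≤ (2/m) * r * (Fint f r) ^ (-(1:ℝ)/2) := h1
        _ ≤ (2/m) * r * ((Fint f 1) ^ (-(1:ℝ)/2) * r ^ (-((2+m)/2))) := by
            rw [← h4]; exact mul_le_mul_of_nonneg_left h3 (by positivity)
        _ = (2/m) * (Fint f 1) ^ (-(1:ℝ)/2) * (r * r ^ (-(((2:ℝ)+m)/2))) := by ring
        _ = (2/m) * (Fint f 1) ^ (-(1:ℝ)/2) * r ^ (-(m/2)) := by rw [h5]
    have h7 : A ≤ r ^ (m/2) := by
      have hrA : A ^ ((2:ℝ)/m) ≤ r := le_trans (le_max_right _ _) hr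
      have h8 := Real.rpow_le_rpow (by positivity) hrA (by positivity : (0:ℝ) ≤ m/2)
      have he : ((2:ℝ)/m) * (m/2) = 1 := by field_simp
      rwa [← Real.rpow_mul hA.le, he, Real.rpow_one] at h8
    have hrm : (0:ℝ) < r ^ (m/2) := Real.rpow_pos_of_pos hr0 _
    have h8 : r ^ (-(m/2)) = (r ^ (m/2))⁻¹ := Real.rpow_neg hr0.le (m/2)
    rw [h8] at h6
    have h10 : (2/m) * (Fint f 1) ^ (-(1:ℝ)/2) ≤ v₀ * r ^ (m/2) := by
      rw [hA_def, div_le_iff₀ hv₀] at h7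
      linarith
    have h9 : (2/m) * (Fint f 1) ^ (-(1:ℝ)/2) * (r ^ (m/2))⁻¹ ≤ v₀ := by
      calc (2/m) * (Fint f 1) ^ (-(1:ℝ)/2) * (r ^ (m/2))⁻¹
          ≤ (v₀ * r ^ (m/2)) * (r ^ (m/2))⁻¹ := mul_le_mul_of_nonneg_right h10 (by positivity)
        _ = v₀ := by field_simp
    linarith
  -- the constant
  refine ⟨R, hR0, (M/m) ^ ((2:ℝ)/m) * C₀, by positivity, ?_⟩
  intro r hr
  have hr0 : (0:ℝ) < r := lt_of_lt_of_le hR0 hr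
  have hw₀ : 0 < Wfun f r := hWpos r hr0
  have hεr_pos : 0 < KOker φinv f r := hu_pos _ hw₀
  have hεr_le : KOker φinv f r ≤ ε₀ := by
    have h1 := hu_mono _ _ hw₀ (hWR r hr)
    rw [hv₀_def, huv ε₀ hε₀] at h1
    exact h1
  set w₀ : ℝ := Wfun f r with hw₀_def
  set εr : ℝ := KOker φinv f r with hεr_def
  -- the ψ bound
  have hψbound : ∀ w : ℝ, 0 < w → w ≤ w₀ → ψ w ≤ r * ((M/m) * (w₀ / w)) ^ ((2:ℝ)/m) := by
    intro w hw hww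
    have hbase : (1:ℝ) ≤ (M/m) * (w₀/w) := by
      have h1 : (1:ℝ) ≤ w₀/w := (one_le_div hw).2 hww
      have h2 : (1:ℝ) ≤ M/m := (one_le_div hm).2 hmM
      nlinarith
    have hrp1 : (1:ℝ) ≤ ((M/m) * (w₀/w)) ^ ((2:ℝ)/m) :=
      Real.one_le_rpow hbase (by positivity)
    have hsψ : 0 < ψ w := hψpos w hw
    rcases le_or_gt (ψ w) r with h | h
    · nlinarith
    · have hde := hWdecay r (ψ w) hr0 h.le
      rw [hWψ w hw] at hde
      have hq : (ψ w / r) ^ (m/2) ≤ (M/m) * (w₀/w) := by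
        have h2 : w * ((ψ w / r) ^ (m/2)) ≤ w * ((M/m) * (w₀/w)) := by
          have h3 : w * ((M/m) * (w₀/w)) = (M/m) * w₀ := by field_simp
          rw [h3]; linarith
        exact le_of_mul_le_mul_left h2 hw
      have h3 : ((ψ w / r) ^ (m/2)) ^ ((2:ℝ)/m) ≤ ((M/m) * (w₀/w)) ^ ((2:ℝ)/m) :=
        Real.rpow_le_rpow (by positivity) hq (by positivity)
      have he : (m/2) * ((2:ℝ)/m) = 1 := by field_simp
      rw [← Real.rpow_mul (by positivity : (0:ℝ) ≤ ψ w / r), he, Real.rpow_one] at h3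
      rw [div_le_iff₀ hr0] at h3
      linarith
  -- monotonicity and measurability of the kernel
  have hg_anti : ∀ a b : ℝ, 0 < a → a ≤ b → KOker φinv f b ≤ KOker φinv f a := by
    intro a b ha hab
    rw [KOker_eq_uFun, KOker_eq_uFun]
    exact hu_mono _ _ (hWpos b (lt_of_lt_of_le ha hab)) (hWanti a b ha hab)
  have hg_meas : AEMeasurable (fun t => KOker φinv f t) (volume.restrict (Set.Ioi r)) := by
    have hanti : Antitone (fun t : ℝ => KOker φinv f (max t r)) := by
      intro t₁ t₂ h12
      exact hg_anti _ _ (lt_of_lt_of_le hr0 (le_max_right _ _)) (max_le_max h12 le_rfl)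
    refine (hanti.measurable.aemeasurable).congr ?_
    filter_upwards [ae_restrict_mem measurableSet_Ioi] with t ht
    rw [max_eq_left (le_of_lt ht)]
  have hg_nn : 0 ≤ᵐ[volume.restrict (Set.Ioi r)] fun t => KOker φinv f t := by
    filter_upwards [ae_restrict_mem measurableSet_Ioi] with t ht
    exact (hu_pos _ (hWpos t (hr0.trans ht))).le
  -- layer cake
  have hlc := lintegral_eq_lintegral_meas_lt (volume.restrict (Set.Ioi r)) hg_nn hg_meas
  -- measure bound
  have hmb : ∀ ε : ℝ, ε ∈ Set.Ioi (0:ℝ) →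
      (volume.restrict (Set.Ioi r)) {t | ε < KOker φinv f t}
        ≤ (Set.Ioc (0:ℝ) εr).indicator
            (fun ε => ENNReal.ofReal (r * (M/m) ^ ((2:ℝ)/m) * w₀ ^ ((2:ℝ)/m))
              * ENNReal.ofReal ((φ (ε ^ (-(2:ℝ)))) ^ (1/m))) ε := by
    intro ε hε
    have hε0 : (0:ℝ) < ε := hε
    rw [Measure.restrict_apply' measurableSet_Ioi]
    rcases le_or_gt ε εr with hle | hgt
    · have hmem : ε ∈ Set.Ioc (0:ℝ) εr := ⟨hε0, hle⟩
      rw [Set.indicator_of_mem hmem]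
      have hvε : 0 < PhiFun φ ε := hv_pos ε hε0
      have hφε : (0:ℝ) < φ (ε ^ (-(2:ℝ))) := hφpos _ (hrpow_neg2 ε hε0)
      have hvεw : PhiFun φ ε ≤ w₀ := by
        have h1 := hv_mono ε εr hε0 hle
        rw [hεr_def, KOker_eq_uFun, hvu _ hw₀] at h1
        exact h1
      have hsub : {t | ε < KOker φinv f t} ∩ Set.Ioi r ⊆ Set.Ioo r (ψ (PhiFun φ ε)) := by
        rintro t ⟨ht1, ht2⟩
        have ht2' : r < t := ht2
        have ht0 : 0 < t := hr0.trans ht2'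
        have hWt : 0 < Wfun f t := hWpos t ht0
        have hWtv : PhiFun φ ε < Wfun f t := by
          by_contra hcon
          push_neg at hcon
          have h1 := hu_mono _ _ hWt hcon
          rw [huv ε hε0] at h1
          rw [Set.mem_setOf_eq, KOker_eq_uFun] at ht1
          exact absurd ht1 (not_lt.2 h1)
        refine ⟨ht2', ?_⟩
        by_contra hcon
        push_neg at hcon
        have h1 := hWanti _ _ (hψpos _ hvε) hcon
        rw [hWψ _ hvε] at h1
        exact absurd hWtv (not_lt.2 h1)
      have hGv : (PhiFun φ ε) ^ ((2:ℝ)/m) = ((φ (ε ^ (-(2:ℝ)))) ^ ((1:ℝ)/m))⁻¹ := by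
        show ((φ (ε ^ (-(2:ℝ)))) ^ (-(1:ℝ)/2)) ^ ((2:ℝ)/m) = _
        rw [← Real.rpow_mul hφε.le, ← Real.rpow_neg hφε.le]
        congr 1
        ring
      have hsplit : r * ((M/m) * (w₀ / PhiFun φ ε)) ^ ((2:ℝ)/m)
          = r * (M/m) ^ ((2:ℝ)/m) * w₀ ^ ((2:ℝ)/m) * (φ (ε ^ (-(2:ℝ)))) ^ ((1:ℝ)/m) := by
        rw [Real.mul_rpow (by positivity) (by positivity),
          Real.div_rpow hw₀.le hvε.le, hGv, div_inv_eq_mul]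
        ring
      calc volume ({t | ε < KOker φinv f t} ∩ Set.Ioi r)
          ≤ volume (Set.Ioo r (ψ (PhiFun φ ε))) := measure_mono hsub
        _ = ENNReal.ofReal (ψ (PhiFun φ ε) - r) := Real.volume_Ioo
        _ ≤ ENNReal.ofReal (r * (M/m) ^ ((2:ℝ)/m) * w₀ ^ ((2:ℝ)/m)
              * (φ (ε ^ (-(2:ℝ)))) ^ ((1:ℝ)/m)) := by
            apply ENNReal.ofReal_le_ofReal
            have h1 := hψbound (PhiFun φ ε) hvε hvεw
            rw [hsplit] at h1
            linarith
        _ = ENNReal.ofReal (r * (M/m) ^ ((2:ℝ)/m) * w₀ ^ ((2:ℝ)/m))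
              * ENNReal.ofReal ((φ (ε ^ (-(2:ℝ)))) ^ (1/m)) := by
            rw [← ENNReal.ofReal_mul (by positivity)]
    · rw [Set.indicator_of_notMem (fun hc => absurd hc.2 (not_le.2 hgt))]
      have hempty : {t | ε < KOker φinv f t} ∩ Set.Ioi r = ∅ := by
        ext t
        simp only [Set.mem_inter_iff, Set.mem_setOf_eq, Set.mem_Ioi, Set.mem_empty_iff_false,
          iff_false, not_and]
        intro h1 h2
        have h3 := hg_anti r t hr0 h2.le
        rw [← hεr_def] at h3
        exact absurd h1 (not_lt.2 (h3.trans hgt.le))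
      rw [hempty, measure_empty]
  -- putting it together
  have hstep2 : (∫⁻ t in Set.Ioi r, ENNReal.ofReal (KOker φinv f t))
      ≤ ENNReal.ofReal (((M/m) ^ ((2:ℝ)/m) * C₀) * r * εr) := by
    have hGεr : (φ (εr ^ (-(2:ℝ)))) ^ ((1:ℝ)/m) = w₀ ^ (-((2:ℝ)/m)) := by
      have h1 : εr ^ (-(2:ℝ)) = φinv (w₀ ^ (-(2:ℝ))) := by
        rw [hεr_def, KOker_eq_uFun]
        exact hinv_sq _ (hφinvpos _ (hrpow_neg2 w₀ hw₀))
      rw [h1, hφinv₂ _ (hrpow_neg2 w₀ hw₀), ← Real.rpow_mul hw₀.le]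
      congr 1
      ring
    calc (∫⁻ t in Set.Ioi r, ENNReal.ofReal (KOker φinv f t))
        = ∫⁻ ε in Set.Ioi (0:ℝ), (volume.restrict (Set.Ioi r)) {t | ε < KOker φinv f t} := hlc
      _ ≤ ∫⁻ ε in Set.Ioi (0:ℝ), (Set.Ioc (0:ℝ) εr).indicator
            (fun ε => ENNReal.ofReal (r * (M/m) ^ ((2:ℝ)/m) * w₀ ^ ((2:ℝ)/m))
              * ENNReal.ofReal ((φ (ε ^ (-(2:ℝ)))) ^ (1/m))) ε := by
          apply lintegral_mono_ae
          filter_upwards [ae_restrict_mem measurableSet_Ioi] with ε hε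
          exact hmb ε hε
      _ = ∫⁻ ε in Set.Ioc (0:ℝ) εr, ENNReal.ofReal (r * (M/m) ^ ((2:ℝ)/m) * w₀ ^ ((2:ℝ)/m))
              * ENNReal.ofReal ((φ (ε ^ (-(2:ℝ)))) ^ (1/m)) := by
          rw [lintegral_indicator measurableSet_Ioc,
            Measure.restrict_restrict measurableSet_Ioc,
            Set.inter_eq_self_of_subset_left Set.Ioc_subset_Ioi_self]
      _ = ENNReal.ofReal (r * (M/m) ^ ((2:ℝ)/m) * w₀ ^ ((2:ℝ)/m))
            * ∫⁻ ε in Set.Ioc (0:ℝ) εr, ENNReal.ofReal ((φ (ε ^ (-(2:ℝ)))) ^ (1/m)) :=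
          lintegral_const_mul' _ _ ENNReal.ofReal_ne_top
      _ ≤ ENNReal.ofReal (r * (M/m) ^ ((2:ℝ)/m) * w₀ ^ ((2:ℝ)/m))
            * ENNReal.ofReal (C₀ * εr * (φ (εr ^ (-(2:ℝ)))) ^ (1/m)) :=
          mul_le_mul_right (hkato εr ⟨hεr_pos, hεr_le⟩) _
      _ = ENNReal.ofReal (((M/m) ^ ((2:ℝ)/m) * C₀) * r * εr) := by
          rw [hGεr, ← ENNReal.ofReal_mul (by positivity)]
          congr 1
          have hww : w₀ ^ ((2:ℝ)/m) * w₀ ^ (-((2:ℝ)/m)) = 1 := by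
            rw [← Real.rpow_add hw₀]; simp
          calc r * (M/m) ^ ((2:ℝ)/m) * w₀ ^ ((2:ℝ)/m) * (C₀ * εr * w₀ ^ (-((2:ℝ)/m)))
              = ((M/m) ^ ((2:ℝ)/m) * C₀) * r * εr * (w₀ ^ ((2:ℝ)/m) * w₀ ^ (-((2:ℝ)/m))) := by
                ring
            _ = ((M/m) ^ ((2:ℝ)/m) * C₀) * r * εr := by rw [hww, mul_one]
  have hnn' : (0:ℝ) ≤ ((M/m) ^ ((2:ℝ)/m) * C₀) * r * εr :=
    mul_nonneg (mul_nonneg (by positivity) hr0.le) hεr_pos.le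
  constructor
  · refine ⟨hg_meas.aestronglyMeasurable, ?_⟩
    rw [hasFiniteIntegral_iff_ofReal hg_nn]
    exact lt_of_le_of_lt hstep2 ENNReal.ofReal_lt_top
  · rw [integral_eq_lintegral_of_nonneg_ae hg_nn hg_meas.aestronglyMeasurable]
    exact ENNReal.toReal_le_of_le_ofReal hnn' hstep2
end
end

section
/- Let A ⊂ ℝ^d be a bounded open set and u : ℝ^d → ℝ a bounded continuous function with u = 0 on ℝ^d ∖ A, which is C² on A and satisfies Lu(x) ≥ 0 for every x ∈ A (the principal-value limit defining Lu(x) exists for each x ∈ A since u is C² near x, bounded, and j is integrable away from 0). Then u ≤ 0 on ℝ^d. (Nonlocal maximum principle.) -/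
open MeasureTheory Filter Topology Set

noncomputable section

/-- The truncated integral `∫_{|y|>r} (w(x+y) - w(x)) j(|y|) dy` approximating the
principal value defining `Lw(x)`. -/
noncomputable def truncL (d : ℕ) (j : ℝ → ℝ) (w : EuclideanSpace ℝ (Fin d) → ℝ)
    (x : EuclideanSpace ℝ (Fin d)) (r : ℝ) : ℝ :=
  ∫ y in {y : EuclideanSpace ℝ (Fin d) | r < ‖y‖}, (w (x + y) - w x) * j ‖y‖

/-- The principal value `Lw(x) = lim_{δ↓0} ∫_{|y|>δ} (w(x+y) - w(x)) j(|y|) dy`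
exists and equals `ℓ`. -/
def HasPVLim (d : ℕ) (j : ℝ → ℝ) (w : EuclideanSpace ℝ (Fin d) → ℝ)
    (x : EuclideanSpace ℝ (Fin d)) (ℓ : ℝ) : Prop :=
  Tendsto (truncL d j w x) (𝓝[>] (0:ℝ)) (𝓝 ℓ)

/-- `ξ ∈ C_c^∞(Ω)`. -/
def IsTestOn (d : ℕ) (Ω : Set (EuclideanSpace ℝ (Fin d)))
    (ξ : EuclideanSpace ℝ (Fin d) → ℝ) : Prop :=
  ContDiff ℝ (⊤ : ℕ∞) ξ ∧ HasCompactSupport ξ ∧ tsupport ξ ⊆ Ω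

/-- Nonlocal maximum principle. -/
theorem nonlocal_maximum_principle
    (d : ℕ) (hd : 2 ≤ d)
    (j : ℝ → ℝ) (hjpos : ∀ r > 0, 0 < j r) (hjanti : AntitoneOn j (Set.Ioi 0))
    (hjint : Integrable (fun y : EuclideanSpace ℝ (Fin d) => min 1 (‖y‖ ^ 2) * j ‖y‖))
    (A : Set (EuclideanSpace ℝ (Fin d))) (hAo : IsOpen A) (hAb : Bornology.IsBounded A)
    (u : EuclideanSpace ℝ (Fin d) → ℝ) (hucont : Continuous u)
    (hubdd : ∃ M, ∀ x, |u x| ≤ M)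
    (huzero : ∀ x ∉ A, u x = 0)
    (huC2 : ContDiffOn ℝ 2 u A)
    (huL : ∀ x ∈ A, ∃ ℓ, HasPVLim d j u x ℓ ∧ 0 ≤ ℓ) :
    ∀ x, u x ≤ 0 := by
  intro x
  by_contra hx
  push_neg at hx
  have hxA : x ∈ A := by
    by_contra h
    rw [huzero x h] at hx
    exact lt_irrefl _ hx
  have hK : IsCompact (closure A) := hAb.isCompact_closure
  obtain ⟨x₀, hx₀K, hmax⟩ := hK.exists_isMaxOn ⟨x, subset_closure hxA⟩ hucont.continuousOn
  have hM : 0 < u x₀ := lt_of_lt_of_le hx (hmax (subset_closure hxA))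
  have hx₀A : x₀ ∈ A := by
    by_contra h
    rw [huzero x₀ h] at hM
    exact lt_irrefl _ hM
  set M := u x₀ with hMdef
  have hglob : ∀ z, u z ≤ M := by
    intro z
    by_cases hz : z ∈ closure A
    · exact hmax hz
    · rw [huzero z (fun h => hz (subset_closure h))]; exact hM.le
  obtain ⟨ℓ, hℓ, hℓ0⟩ := huL x₀ hx₀A
  obtain ⟨M', hM'⟩ := hubdd
  obtain ⟨R₀, hR₀⟩ := hAb.subset_ball 0
  set R : ℝ := max 1 (max (‖x₀‖ + 1) R₀) with hRdef
  have hR1 : (1:ℝ) ≤ R := le_max_left _ _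
  have hRx : ‖x₀‖ < R :=
    lt_of_lt_of_le (by linarith) (le_trans (le_max_left _ _) (le_max_right _ _))
  have hRA : A ⊆ Metric.ball 0 R :=
    hR₀.trans (Metric.ball_subset_ball (le_trans (le_max_right _ _) (le_max_right _ _)))
  haveI : Nonempty (Fin d) := ⟨⟨0, by omega⟩⟩
  -- a.e. measurability of y ↦ j ‖y‖
  have hjm : AEMeasurable (fun y : EuclideanSpace ℝ (Fin d) => j ‖y‖) volume := by
    have hg : AEMeasurable
        (fun y : EuclideanSpace ℝ (Fin d) => min 1 (‖y‖ ^ 2) * j ‖y‖) volume :=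
      hjint.aemeasurable
    have h0 : AEMeasurable
        (fun y : EuclideanSpace ℝ (Fin d) => (min 1 (‖y‖ ^ 2) * j ‖y‖) / min 1 (‖y‖ ^ 2))
        volume :=
      hg.div ((measurable_const.min (measurable_norm.pow_const 2)).aemeasurable)
    refine h0.congr ?_
    have hz : volume ({(0 : EuclideanSpace ℝ (Fin d))} : Set _) = 0 := measure_singleton 0
    rw [Filter.eventuallyEq_iff_exists_mem]
    refine ⟨{(0 : EuclideanSpace ℝ (Fin d))}ᶜ, ?_, ?_⟩
    · rw [mem_ae_iff, compl_compl]; exact hz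
    · intro y hy
      have hy0 : y ≠ 0 := hy
      have : (0:ℝ) < min 1 (‖y‖ ^ 2) := by
        have : (0:ℝ) < ‖y‖ := norm_pos_iff.mpr hy0
        exact lt_min one_pos (by positivity)
      field_simp
  have hsmeas : ∀ r : ℝ, MeasurableSet {y : EuclideanSpace ℝ (Fin d) | r < ‖y‖} :=
    fun r => measurableSet_lt measurable_const measurable_norm
  -- integrability of j ∘ norm away from 0
  have hjint' : ∀ r : ℝ, 0 < r →
      IntegrableOn (fun y : EuclideanSpace ℝ (Fin d) => j ‖y‖) {y | r < ‖y‖} volume := by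
    intro r hr
    have hmin : (0:ℝ) < min 1 (r ^ 2) := lt_min one_pos (by positivity)
    refine Integrable.mono' ((hjint.const_mul ((min 1 (r ^ 2))⁻¹)).integrableOn)
      hjm.aestronglyMeasurable.restrict ?_
    rw [ae_restrict_iff' (hsmeas r)]
    filter_upwards with y hy
    have hy0 : 0 < ‖y‖ := lt_trans hr hy
    have hj0 : 0 < j ‖y‖ := hjpos _ hy0
    rw [Real.norm_eq_abs, abs_of_pos hj0]
    have h1 : min 1 (r ^ 2) ≤ min 1 (‖y‖ ^ 2) :=
      min_le_min le_rfl (by nlinarith)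
    calc j ‖y‖ = (min 1 (r ^ 2))⁻¹ * (min 1 (r ^ 2) * j ‖y‖) := by field_simp
    _ ≤ (min 1 (r ^ 2))⁻¹ * (min 1 (‖y‖ ^ 2) * j ‖y‖) := by
        apply mul_le_mul_of_nonneg_left _ (inv_pos.mpr hmin).le
        exact mul_le_mul_of_nonneg_right h1 hj0.le
  -- the integrand
  set f : EuclideanSpace ℝ (Fin d) → ℝ := fun y => (u (x₀ + y) - u x₀) * j ‖y‖ with hfdef
  have hfm : AEStronglyMeasurable f volume :=
    (((hucont.comp (continuous_const.add continuous_id)).sub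
      continuous_const).aestronglyMeasurable).mul hjm.aestronglyMeasurable
  have hM'0 : 0 ≤ M' := le_trans (abs_nonneg _) (hM' 0)
  have hfint : ∀ r : ℝ, 0 < r → IntegrableOn f {y | r < ‖y‖} volume := by
    intro r hr
    refine Integrable.mono' ((hjint' r hr).const_mul (2 * M')) hfm.restrict ?_
    rw [ae_restrict_iff' (hsmeas r)]
    filter_upwards with y hy
    have hy0 : 0 < ‖y‖ := lt_trans hr hy
    have hj0 : 0 < j ‖y‖ := hjpos _ hy0
    rw [Real.norm_eq_abs, abs_mul, abs_of_pos hj0]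
    have hub : |u (x₀ + y) - u x₀| ≤ 2 * M' := by
      have := hM' (x₀ + y)
      have := hM' x₀
      rw [abs_sub_le_iff]
      constructor <;> cases abs_le.mp (hM' (x₀ + y)) <;> cases abs_le.mp (hM' x₀) <;> linarith
    calc |u (x₀ + y) - u x₀| * j ‖y‖ ≤ (2 * M') * j ‖y‖ :=
        mul_le_mul_of_nonneg_right hub hj0.le
    _ = 2 * M' * j ‖y‖ := by ring
  have hfnonpos : ∀ y, f y ≤ 0 := by
    intro y
    rcases eq_or_ne y 0 with h | h
    · simp [hfdef, h]
    · have hj0 : 0 < j ‖y‖ := hjpos _ (norm_pos_iff.mpr h)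
      have : u (x₀ + y) - u x₀ ≤ 0 := sub_nonpos.mpr (hglob _)
      exact mul_nonpos_of_nonpos_of_nonneg this hj0.le
  -- the annulus
  set S : Set (EuclideanSpace ℝ (Fin d)) :=
    {y | 2 * R < ‖y‖} ∩ {y | ‖y‖ < 2 * R + 1} with hSdef
  have hSopen : IsOpen S :=
    (isOpen_lt continuous_const continuous_norm).inter
      (isOpen_lt continuous_norm continuous_const)
  have hSne : S.Nonempty := by
    refine ⟨EuclideanSpace.single (⟨0, by omega⟩ : Fin d) (2 * R + 1 / 2), ?_, ?_⟩ <;>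
      · simp only [mem_setOf_eq, EuclideanSpace.norm_single, Real.norm_eq_abs]
        rw [abs_of_pos (by linarith)]
        linarith
  have hSsub : S ⊆ {y | 2 * R < ‖y‖} := inter_subset_left
  have huS : ∀ y ∈ S, u (x₀ + y) = 0 := by
    intro y hy
    apply huzero
    intro hmem
    have h1 : ‖x₀ + y‖ < R := by simpa using hRA hmem
    have h2 : 2 * R < ‖y‖ := hy.1
    have h3 : ‖y‖ ≤ ‖x₀ + y‖ + ‖x₀‖ := by
      calc ‖y‖ = ‖(x₀ + y) - x₀‖ := by congr 1; abel
      _ ≤ ‖x₀ + y‖ + ‖x₀‖ := norm_sub_le _ _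
    linarith
  have hjintS : IntegrableOn (fun y : EuclideanSpace ℝ (Fin d) => j ‖y‖) S volume :=
    (hjint' (2 * R) (by linarith)).mono_set hSsub
  set c : ℝ := ∫ y in S, j ‖y‖ with hcdef
  have hc : 0 < c := by
    rw [hcdef]
    rw [setIntegral_pos_iff_support_of_nonneg_ae ?_ hjintS]
    · refine lt_of_lt_of_le (hSopen.measure_pos volume hSne) (measure_mono ?_)
      intro y hy
      refine ⟨?_, hy⟩
      have : 0 < j ‖y‖ := hjpos _ (by have := hy.1; simp only [mem_setOf_eq] at this; linarith)
      exact ne_of_gt this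
    · refine (ae_restrict_iff' hSopen.measurableSet).mpr ?_
      filter_upwards with y hy
      exact (hjpos _ (by have := hy.1; simp only [mem_setOf_eq] at this; linarith)).le
  have hfS : ∫ y in S, f y = -(M * c) := by
    have : ∀ y ∈ S, f y = -(M * j ‖y‖) := by
      intro y hy
      simp only [hfdef]
      rw [huS y hy]
      ring
    rw [setIntegral_congr_fun hSopen.measurableSet this]
    rw [integral_neg, integral_const_mul]
  -- key estimate
  have key : ∀ r ∈ Ioo (0:ℝ) 1, truncL d j u x₀ r ≤ -(M * c) := by
    intro r hr
    have htrunc : truncL d j u x₀ r = ∫ y in {y : EuclideanSpace ℝ (Fin d) | r < ‖y‖}, f y := rfl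
    rw [htrunc, ← hfS]
    have hsub : S ⊆ {y : EuclideanSpace ℝ (Fin d) | r < ‖y‖} := by
      intro y hy
      have : 2 * R < ‖y‖ := hy.1
      have : r < 1 := hr.2
      simp only [mem_setOf_eq]
      linarith
    have hmono := setIntegral_mono_set ((hfint r hr.1).neg)
      (Filter.Eventually.of_forall (fun y => neg_nonneg.mpr (hfnonpos y)))
      (HasSubset.Subset.eventuallyLE hsub)
    simp only [Pi.neg_apply, integral_neg] at hmono
    linarith
  have hmem : Ioo (0:ℝ) 1 ∈ 𝓝[>] (0:ℝ) := Ioo_mem_nhdsGT_of_mem ⟨le_refl 0, one_pos⟩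
  have hle : ℓ ≤ -(M * c) :=
    le_of_tendsto hℓ (Filter.eventually_iff_exists_mem.mpr ⟨Ioo 0 1, hmem, key⟩)
  have : 0 < M * c := mul_pos hM hc
  linarith
end
end

section
/- Let v ∈ C²(ℝ^d) ∩ L¹(ℝ^d, (1∧j(|x|))dx) and let γ : ℝ → ℝ be a convex C² function with γ(0) = 0 and γ' bounded. Then for every x ∈ ℝ^d the principal-value limits Lv(x) and L(γ∘v)(x) exist, and L(γ∘v)(x) ≥ γ'(v(x))·Lv(x). -/
open MeasureTheory Filter Topology Set

noncomputable section

theorem tangent_line (γ : ℝ → ℝ) (hγd : Differentiable ℝ γ) (hγconv : ConvexOn ℝ Set.univ γ)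
    (a b : ℝ) : deriv γ b * (a - b) ≤ γ a - γ b := by
  rcases lt_trichotomy a b with h | h | h
  · have hs := hγconv.slope_le_deriv (mem_univ a) (mem_univ b) h (hγd b)
    rw [slope_def_field, div_le_iff₀ (by linarith : (0:ℝ) < b - a)] at hs
    nlinarith
  · simp [h]
  · have hs := hγconv.deriv_le_slope (mem_univ b) (mem_univ a) h (hγd b)
    rw [slope_def_field, le_div_iff₀ (by linarith : (0:ℝ) < a - b)] at hs
    nlinarith

theorem taylor_bound {E : Type*} [NormedAddCommGroup E] [NormedSpace ℝ E] [FiniteDimensional ℝ E]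
    (w : E → ℝ) (hw : ContDiff ℝ 2 w) (x : E) :
    ∃ C : ℝ, 0 ≤ C ∧ ∀ y : E, ‖y‖ ≤ 1 → |w (x + y) - w x - fderiv ℝ w x y| ≤ C * ‖y‖ ^ 2 := by
  have hw1 : Differentiable ℝ w := hw.differentiable (by norm_num)
  have hf'C1 : ContDiff ℝ 1 (fderiv ℝ w) := hw.fderiv_right (by norm_num)
  have hf'd : Differentiable ℝ (fderiv ℝ w) := hf'C1.differentiable (by norm_num)
  -- bound the second derivative on the closed ball of radius 2
  obtain ⟨C, hC⟩ := (isCompact_closedBall x 2).exists_bound_of_continuousOn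
    (hf'C1.continuous_fderiv (by norm_num)).continuousOn
  have hC0 : 0 ≤ C := le_trans (norm_nonneg _) (hC x (Metric.mem_closedBall_self (by norm_num)))
  refine ⟨C, hC0, fun y hy => ?_⟩
  -- f' is C-Lipschitz on the closed ball
  have hlip : ∀ z ∈ Metric.closedBall x 2, ‖fderiv ℝ w z - fderiv ℝ w x‖ ≤ C * ‖z - x‖ := by
    intro z hz
    exact (convex_closedBall x 2).norm_image_sub_le_of_norm_fderiv_le
      (fun u _ => hf'd u) hC (Metric.mem_closedBall_self (by norm_num)) hz
  set g : E → ℝ := fun z => w z - fderiv ℝ w x z with hg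
  have hgd : ∀ z, DifferentiableAt ℝ g z := fun z =>
    (hw1 z).sub ((fderiv ℝ w x).differentiable z)
  have hgderiv : ∀ z, fderiv ℝ g z = fderiv ℝ w z - fderiv ℝ w x := by
    intro z
    rw [hg]
    rw [fderiv_fun_sub (hw1 z) ((fderiv ℝ w x).differentiable z), (fderiv ℝ w x).fderiv]
  have key : ‖g (x + y) - g x‖ ≤ (C * ‖y‖) * ‖(x + y) - x‖ := by
    apply (convex_closedBall x ‖y‖).norm_image_sub_le_of_norm_fderiv_le (fun u _ => hgd u)
    · intro z hz
      rw [hgderiv z]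
      have hz2 : z ∈ Metric.closedBall x 2 := by
        rw [Metric.mem_closedBall] at hz ⊢
        calc dist z x ≤ ‖y‖ := hz
        _ ≤ 2 := by linarith
      calc ‖fderiv ℝ w z - fderiv ℝ w x‖ ≤ C * ‖z - x‖ := hlip z hz2
      _ ≤ C * ‖y‖ := by
          apply mul_le_mul_of_nonneg_left _ hC0
          rw [← dist_eq_norm]; exact hz
    · exact Metric.mem_closedBall_self (norm_nonneg y)
    · rw [Metric.mem_closedBall, dist_eq_norm]; simp
  have : g (x + y) - g x = w (x + y) - w x - fderiv ℝ w x y := by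
    simp only [hg]
    have : fderiv ℝ w x (x + y) = fderiv ℝ w x x + fderiv ℝ w x y := by
      rw [← map_add]
    rw [this]; ring
  rw [this] at key
  rw [Real.norm_eq_abs] at key
  calc |w (x + y) - w x - fderiv ℝ w x y| ≤ (C * ‖y‖) * ‖(x+y) - x‖ := key
  _ = C * ‖y‖ ^ 2 := by rw [add_sub_cancel_left]; ring

variable {d : ℕ}

/-- a.e.-strong measurability of `y ↦ j ‖y‖` derived from the integrability hypothesis. -/
lemma aesm_j_norm (j : ℝ → ℝ)
    (hjint : Integrable (fun y : EuclideanSpace ℝ (Fin d) => min 1 (‖y‖ ^ 2) * j ‖y‖))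
    (h0 : volume ({0} : Set (EuclideanSpace ℝ (Fin d))) = 0) :
    AEStronglyMeasurable (fun y : EuclideanSpace ℝ (Fin d) => j ‖y‖) volume := by
  have hq : AEStronglyMeasurable (fun y : EuclideanSpace ℝ (Fin d) =>
      (min 1 (‖y‖ ^ 2) * j ‖y‖) / min 1 (‖y‖ ^ 2)) volume :=
    (hjint.aemeasurable.div
      ((continuous_const.min ((continuous_norm).pow 2)).measurable.aemeasurable)).aestronglyMeasurable
  apply hq.congr
  have : ∀ y : EuclideanSpace ℝ (Fin d), y ≠ 0 →
      (min 1 (‖y‖ ^ 2) * j ‖y‖) / min 1 (‖y‖ ^ 2) = j ‖y‖ := by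
    intro y hy
    have hpos : 0 < min 1 (‖y‖ ^ 2) := by
      have : 0 < ‖y‖ := norm_pos_iff.mpr hy
      positivity
    field_simp
  filter_upwards [measure_eq_zero_iff_ae_notMem.mp h0] with y hy
  exact this y hy

lemma integrableOn_truncand
    (j : ℝ → ℝ) (hjpos : ∀ r > 0, 0 < j r) (hjanti : AntitoneOn j (Set.Ioi 0))
    (hjint : Integrable (fun y : EuclideanSpace ℝ (Fin d) => min 1 (‖y‖ ^ 2) * j ‖y‖))
    (κ : ℝ) (hκ : 1 ≤ κ) (hjdoub : ∀ r > 0, j r ≤ κ * j (2 * r))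
    (hjm : AEStronglyMeasurable (fun y : EuclideanSpace ℝ (Fin d) => j ‖y‖) volume)
    (w : EuclideanSpace ℝ (Fin d) → ℝ) (hw : Continuous w)
    (hwL1 : Integrable (fun z : EuclideanSpace ℝ (Fin d) => w z * min 1 (j ‖z‖)))
    (x : EuclideanSpace ℝ (Fin d)) (r : ℝ) (hr : 0 < r) :
    IntegrableOn (fun y : EuclideanSpace ℝ (Fin d) => (w (x + y) - w x) * j ‖y‖)
      {y : EuclideanSpace ℝ (Fin d) | r < ‖y‖} volume := by
  set f : EuclideanSpace ℝ (Fin d) → ℝ := fun y => (w (x + y) - w x) * j ‖y‖ with hf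
  have hwx : Continuous fun y : EuclideanSpace ℝ (Fin d) => w (x + y) - w x :=
    (hw.comp (continuous_add_left x)).sub continuous_const
  have hfm : AEStronglyMeasurable f volume :=
    hwx.aestronglyMeasurable.mul hjm
  set R : ℝ := 2 * ‖x‖ + 2 with hR
  have hR2 : (2:ℝ) ≤ R := by rw [hR]; linarith [norm_nonneg x]
  have hj0 : ∀ s : ℝ, 0 < s → 0 ≤ j s := fun s hs => (hjpos s hs).le
  -- piece 1 : bounded annulus
  have h1 : IntegrableOn f ({y : EuclideanSpace ℝ (Fin d) | r < ‖y‖} ∩ Metric.closedBall 0 R)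
      volume := by
    obtain ⟨M, hM⟩ := (isCompact_closedBall (0:EuclideanSpace ℝ (Fin d)) R).exists_bound_of_continuousOn
      hwx.continuousOn
    refine ⟨hfm.restrict, ?_⟩
    apply HasFiniteIntegral.restrict_of_bounded (C := M * j r)
    · exact lt_of_le_of_lt (measure_mono inter_subset_right) measure_closedBall_lt_top
    · rw [ae_restrict_iff' ((measurableSet_lt measurable_const measurable_norm).inter
        measurableSet_closedBall)]
      filter_upwards with y hy
      obtain ⟨hy1, hy2⟩ := hy
      have hy1 : r < ‖y‖ := hy1
      have hy0 : 0 < ‖y‖ := lt_trans hr hy1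
      have hjy : j ‖y‖ ≤ j r := hjanti hr hy0 hy1.le
      have hjy0 : 0 ≤ j ‖y‖ := hj0 _ hy0
      have hMy : ‖w (x + y) - w x‖ ≤ M := hM y hy2
      have hM0 : 0 ≤ M := le_trans (norm_nonneg _) hMy
      show ‖(w (x + y) - w x) * j ‖y‖‖ ≤ M * j r
      rw [norm_mul, Real.norm_eq_abs (j ‖y‖), abs_of_nonneg hjy0]
      exact mul_le_mul hMy hjy hjy0 hM0
  -- far piece
  have h2 : IntegrableOn f {y : EuclideanSpace ℝ (Fin d) | R < ‖y‖} volume := by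
    have htrans : Integrable
        (fun y : EuclideanSpace ℝ (Fin d) => w (x + y) * min 1 (j ‖x + y‖)) volume := by
      have := ((measurePreserving_add_left (volume : Measure (EuclideanSpace ℝ (Fin d))) x).integrable_comp
        hwL1.aestronglyMeasurable).mpr hwL1
      simpa [Function.comp_def] using this
    have hjfar : IntegrableOn (fun y : EuclideanSpace ℝ (Fin d) => j ‖y‖)
        {y : EuclideanSpace ℝ (Fin d) | 1 < ‖y‖} volume := by
      apply (hjint.integrableOn (s := {y : EuclideanSpace ℝ (Fin d) | 1 < ‖y‖})).congr_fun
      · intro y hy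
        have hy : (1:ℝ) < ‖y‖ := hy
        have h1 : min 1 (‖y‖ ^ 2) = 1 := min_eq_left (one_le_pow₀ hy.le)
        simp [h1]
      · exact measurableSet_lt measurable_const measurable_norm
    set c1 : ℝ := max 1 (j 1) with hc1
    set g : EuclideanSpace ℝ (Fin d) → ℝ :=
      fun y => κ * c1 * |w (x + y) * min 1 (j ‖x + y‖)| + |w x| * j ‖y‖ with hg
    have hgint : IntegrableOn g {y : EuclideanSpace ℝ (Fin d) | R < ‖y‖} volume := by
      apply Integrable.add
      · exact ((htrans.abs.const_mul (κ * c1))).integrableOn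
      · apply Integrable.const_mul
        apply hjfar.mono_set
        intro y hy
        have hy : R < ‖y‖ := hy
        show (1:ℝ) < ‖y‖
        linarith
    refine Integrable.mono' hgint hfm.restrict ?_
    rw [ae_restrict_iff' (measurableSet_lt measurable_const measurable_norm)]
    filter_upwards with y hy
    have hy : R < ‖y‖ := hy
    have hy0 : 0 < ‖y‖ := by linarith
    have hxy1 : 1 < ‖x + y‖ := by
      have h := norm_sub_norm_le y (x + y)
      have h' : y - (x + y) = -x := by abel
      rw [h', norm_neg] at h
      have hyR : 2 * ‖x‖ + 2 < ‖y‖ := by rw [hR] at hy; exact hy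
      linarith
    have hxy0 : 0 < ‖x + y‖ := by linarith
    have hxy2 : ‖x + y‖ ≤ 2 * ‖y‖ := by
      have h := norm_add_le x y
      have hxR : 2 * ‖x‖ + 2 < ‖y‖ := by rw [hR] at hy; linarith
      linarith [norm_nonneg x]
    have key : j ‖y‖ ≤ κ * c1 * min 1 (j ‖x + y‖) := by
      have k1 : j ‖y‖ ≤ κ * j (2 * ‖y‖) := hjdoub _ hy0
      have k2 : j (2 * ‖y‖) ≤ j ‖x + y‖ := hjanti hxy0 (mem_Ioi.mpr (by positivity)) hxy2
      have k3 : j ‖x + y‖ ≤ c1 * min 1 (j ‖x + y‖) := by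
        rcases le_total (j ‖x + y‖) 1 with h | h
        · rw [min_eq_right h]
          nlinarith [hj0 _ hxy0, le_max_left (1:ℝ) (j 1)]
        · rw [min_eq_left h]
          have h2 : j ‖x + y‖ ≤ j 1 := hjanti (mem_Ioi.mpr one_pos) hxy0 hxy1.le
          calc j ‖x + y‖ ≤ j 1 := h2
          _ ≤ c1 * 1 := by rw [mul_one]; exact le_max_right _ _
      have hκ0 : (0:ℝ) < κ := lt_of_lt_of_le one_pos hκ
      calc j ‖y‖ ≤ κ * j (2 * ‖y‖) := k1
      _ ≤ κ * j ‖x + y‖ := by nlinarith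
      _ ≤ κ * (c1 * min 1 (j ‖x + y‖)) := by nlinarith
      _ = κ * c1 * min 1 (j ‖x + y‖) := by ring
    have hjy0 : 0 ≤ j ‖y‖ := hj0 _ hy0
    have hmin0 : 0 ≤ min 1 (j ‖x + y‖) := le_min one_pos.le (hj0 _ hxy0)
    have hc10 : (0:ℝ) ≤ c1 := le_trans one_pos.le (le_max_left _ _)
    have hκ0 : (0:ℝ) ≤ κ := le_trans one_pos.le hκ
    show ‖(w (x + y) - w x) * j ‖y‖‖ ≤ κ * c1 * |w (x + y) * min 1 (j ‖x + y‖)| + |w x| * j ‖y‖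
    rw [norm_mul, Real.norm_eq_abs, Real.norm_eq_abs, abs_of_nonneg hjy0]
    have tri : |w (x + y) - w x| ≤ |w (x + y)| + |w x| := abs_sub _ _
    calc |w (x + y) - w x| * j ‖y‖ ≤ (|w (x + y)| + |w x|) * j ‖y‖ :=
          mul_le_mul_of_nonneg_right tri hjy0
    _ = |w (x + y)| * j ‖y‖ + |w x| * j ‖y‖ := by ring
    _ ≤ κ * c1 * (|w (x + y)| * min 1 (j ‖x + y‖)) + |w x| * j ‖y‖ := by
        have hb : |w (x + y)| * j ‖y‖ ≤ |w (x + y)| * (κ * c1 * min 1 (j ‖x + y‖)) :=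
          mul_le_mul_of_nonneg_left key (abs_nonneg _)
        nlinarith
    _ = κ * c1 * |w (x + y) * min 1 (j ‖x + y‖)| + |w x| * j ‖y‖ := by
        rw [abs_mul, abs_of_nonneg hmin0]
  -- combine
  apply IntegrableOn.mono_set (h1.union h2)
  intro y hy
  have hy : r < ‖y‖ := hy
  rcases le_or_gt ‖y‖ R with h | h
  · left
    exact ⟨hy, by simpa [Metric.mem_closedBall, dist_eq_norm] using h⟩
  · right
    exact h



/-- an odd function integrates to zero over a symmetric set -/
lemma odd_setIntegral_zero (S : Set (EuclideanSpace ℝ (Fin d))) (hSm : MeasurableSet S)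
    (hS : ∀ y, y ∈ S ↔ -y ∈ S) (F : EuclideanSpace ℝ (Fin d) → ℝ)
    (hodd : ∀ y, F (-y) = - F y) : ∫ y in S, F y = 0 := by
  have h1 : ∫ y in S, F y = ∫ y, S.indicator F y := (integral_indicator hSm).symm
  have h2 : ∀ y, S.indicator F (-y) = - S.indicator F y := by
    intro y
    by_cases hy : y ∈ S
    · rw [Set.indicator_of_mem hy, Set.indicator_of_mem ((hS y).mp hy), hodd]
    · rw [Set.indicator_of_notMem hy, Set.indicator_of_notMem (fun h => hy ((hS y).mpr h)),
        neg_zero]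
  have h3 : ∫ y, S.indicator F y = ∫ y, S.indicator F (-y) :=
    (integral_neg_eq_self (fun y => S.indicator F y) volume).symm
  have h4 : ∫ y, S.indicator F (-y) = - ∫ y, S.indicator F y := by
    simp_rw [h2]
    exact integral_neg _
  rw [h1]
  linarith [h3.trans h4]

theorem hasPVLim_of_C2 (h0 : volume ({0} : Set (EuclideanSpace ℝ (Fin d))) = 0)
    (j : ℝ → ℝ) (hjpos : ∀ r > 0, 0 < j r) (hjanti : AntitoneOn j (Set.Ioi 0))
    (hjint : Integrable (fun y : EuclideanSpace ℝ (Fin d) => min 1 (‖y‖ ^ 2) * j ‖y‖))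
    (κ : ℝ) (hκ : 1 ≤ κ) (hjdoub : ∀ r > 0, j r ≤ κ * j (2 * r))
    (hjm : AEStronglyMeasurable (fun y : EuclideanSpace ℝ (Fin d) => j ‖y‖) volume)
    (w : EuclideanSpace ℝ (Fin d) → ℝ) (hwC2 : ContDiff ℝ 2 w)
    (hwL1 : Integrable (fun z : EuclideanSpace ℝ (Fin d) => w z * min 1 (j ‖z‖)))
    (x : EuclideanSpace ℝ (Fin d)) :
    HasPVLim d j w x
      ((∫ y in {y : EuclideanSpace ℝ (Fin d) | 0 < ‖y‖ ∧ ‖y‖ ≤ 1},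
          (w (x + y) - w x - fderiv ℝ w x y) * j ‖y‖) +
        ∫ y in {y : EuclideanSpace ℝ (Fin d) | 1 < ‖y‖}, (w (x + y) - w x) * j ‖y‖) := by
  have hw : Continuous w := hwC2.continuous
  have hj0 : ∀ s : ℝ, 0 < s → 0 ≤ j s := fun s hs => (hjpos s hs).le
  obtain ⟨C, hC0, hTay⟩ := taylor_bound w hwC2 x
  set g := fderiv ℝ w x with hgdef
  set h : EuclideanSpace ℝ (Fin d) → ℝ := fun y => (w (x + y) - w x - g y) * j ‖y‖ with hh
  set A : ℝ → Set (EuclideanSpace ℝ (Fin d)) := fun r => {y | r < ‖y‖ ∧ ‖y‖ ≤ 1} with hA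
  set B : Set (EuclideanSpace ℝ (Fin d)) := {y | 1 < ‖y‖} with hB
  have hAm : ∀ r, MeasurableSet (A r) := fun r =>
    (measurableSet_lt measurable_const measurable_norm).inter
      (measurableSet_le measurable_norm measurable_const)
  have hBm : MeasurableSet B := measurableSet_lt measurable_const measurable_norm
  have hAball : ∀ r, A r ⊆ Metric.closedBall (0:EuclideanSpace ℝ (Fin d)) 1 := by
    intro r y hy
    simpa [Metric.mem_closedBall, dist_eq_norm] using hy.2
  have hhm : AEStronglyMeasurable h volume := by
    apply AEStronglyMeasurable.mul _ hjm
    exact (((hw.comp (continuous_add_left x)).sub continuous_const).sub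
      g.continuous).aestronglyMeasurable
  -- integrability of h on A r for any r ≥ 0
  have hbound : ∀ r ≥ (0:ℝ), ∀ y, ‖(A r).indicator h y‖ ≤ C * (min 1 (‖y‖ ^ 2) * j ‖y‖) := by
    intro r hr y
    by_cases hy : y ∈ A r
    · rw [Set.indicator_of_mem hy]
      obtain ⟨hy1, hy2⟩ := hy
      have hy0 : 0 < ‖y‖ := lt_of_le_of_lt hr hy1
      have hmin : min 1 (‖y‖ ^ 2) = ‖y‖ ^ 2 := min_eq_right (pow_le_one₀ (norm_nonneg y) hy2)
      rw [hmin, hh]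
      simp only [Real.norm_eq_abs, abs_mul]
      rw [abs_of_nonneg (hj0 _ hy0), ← mul_assoc]
      exact mul_le_mul_of_nonneg_right (by simpa using hTay y hy2) (hj0 _ hy0)
    · rw [Set.indicator_of_notMem hy, norm_zero]
      rcases eq_or_ne y 0 with rfl | hy0
      · simp
      · have : 0 < ‖y‖ := norm_pos_iff.mpr hy0
        have h1 : 0 ≤ min 1 (‖y‖ ^ 2) := le_min one_pos.le (by positivity)
        have h2 : 0 ≤ j ‖y‖ := hj0 _ this
        positivity
  have hhint : ∀ r ≥ (0:ℝ), IntegrableOn h (A r) volume := by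
    intro r hr
    refine Integrable.mono' ((hjint.const_mul C).integrableOn) hhm.restrict ?_
    rw [ae_restrict_iff' (hAm r)]
    filter_upwards with y hy
    have := hbound r hr y
    rw [Set.indicator_of_mem hy] at this
    simpa [mul_assoc] using this
  -- integrability of the full truncated integrand
  have hfull : ∀ r > (0:ℝ), IntegrableOn
      (fun y : EuclideanSpace ℝ (Fin d) => (w (x + y) - w x) * j ‖y‖)
      {y : EuclideanSpace ℝ (Fin d) | r < ‖y‖} volume := fun r hr =>
    integrableOn_truncand j hjpos hjanti hjint κ hκ hjdoub hjm w hw hwL1 x r hr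
  have hBint : IntegrableOn
      (fun y : EuclideanSpace ℝ (Fin d) => (w (x + y) - w x) * j ‖y‖) B volume :=
    hfull 1 one_pos
  -- the decomposition of truncL for 0 < r < 1
  have hdecomp : ∀ r ∈ Ioo (0:ℝ) 1, truncL d j w x r =
      (∫ y in A r, h y) + ∫ y in B, (w (x + y) - w x) * j ‖y‖ := by
    intro r hr
    have hsplit : {y : EuclideanSpace ℝ (Fin d) | r < ‖y‖} = A r ∪ B := by
      ext y
      simp only [Set.mem_setOf_eq, Set.mem_union, hA, hB]
      constructor
      · intro hy
        rcases le_or_gt ‖y‖ 1 with h1 | h1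
        · exact Or.inl ⟨hy, h1⟩
        · exact Or.inr h1
      · rintro (⟨h1, _⟩ | h1)
        · exact h1
        · exact lt_trans hr.2 h1
    have hdisj : Disjoint (A r) B := by
      rw [Set.disjoint_left]
      intro y hy hyB
      have h1 : ‖y‖ ≤ 1 := hy.2
      have h2 : (1:ℝ) < ‖y‖ := hyB
      linarith
    have hint := hfull r hr.1
    rw [hsplit] at hint
    have hAint := hint.mono_set (subset_union_left (s := A r) (t := B))
    have hBint' := hint.mono_set (subset_union_right (s := A r) (t := B))
    show (∫ y in {y : EuclideanSpace ℝ (Fin d) | r < ‖y‖}, (w (x + y) - w x) * j ‖y‖) = _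
    rw [hsplit, setIntegral_union hdisj hBm hAint hBint']
    congr 1
    -- ∫ over A r of the full integrand equals ∫ of h
    have hlinint : IntegrableOn (fun y : EuclideanSpace ℝ (Fin d) => g y * j ‖y‖) (A r)
        volume := by
      refine ⟨(g.continuous.aestronglyMeasurable.mul hjm).restrict, ?_⟩
      apply HasFiniteIntegral.restrict_of_bounded (C := ‖g‖ * j r)
      · exact lt_of_le_of_lt (measure_mono (hAball r)) measure_closedBall_lt_top
      · rw [ae_restrict_iff' (hAm r)]
        filter_upwards with y hy
        obtain ⟨hy1, hy2⟩ := hy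
        have hy0 : 0 < ‖y‖ := lt_trans hr.1 hy1
        have hjy : j ‖y‖ ≤ j r := hjanti hr.1 hy0 hy1.le
        have hgy : ‖g y‖ ≤ ‖g‖ := by
          calc ‖g y‖ ≤ ‖g‖ * ‖y‖ := g.le_opNorm y
          _ ≤ ‖g‖ * 1 := mul_le_mul_of_nonneg_left hy2 (norm_nonneg g)
          _ = ‖g‖ := mul_one _
        rw [norm_mul, Real.norm_eq_abs (j ‖y‖), abs_of_nonneg (hj0 _ hy0)]
        exact mul_le_mul hgy hjy (hj0 _ hy0) (norm_nonneg g)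
    have hzero : ∫ y in A r, g y * j ‖y‖ = 0 := by
      apply odd_setIntegral_zero (A r) (hAm r)
      · intro y
        simp [hA, norm_neg]
      · intro y
        rw [norm_neg, map_neg]
        ring
    calc (∫ y in A r, (w (x + y) - w x) * j ‖y‖)
        = ∫ y in A r, (h y + g y * j ‖y‖) := by
          apply setIntegral_congr_fun (hAm r)
          intro y _
          rw [hh]
          ring
    _ = (∫ y in A r, h y) + ∫ y in A r, g y * j ‖y‖ :=
          integral_add (hhint r hr.1.le) hlinint
    _ = ∫ y in A r, h y := by rw [hzero, add_zero]
  -- convergence of the main part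
  have hmain : Tendsto (fun r => ∫ y in A r, h y) (𝓝[>] (0:ℝ))
      (𝓝 (∫ y in A 0, h y)) := by
    have hrw : ∀ r, ∫ y in A r, h y = ∫ y, (A r).indicator h y := fun r =>
      (integral_indicator (hAm r)).symm
    simp_rw [hrw]
    apply tendsto_integral_filter_of_dominated_convergence
      (bound := fun y => C * (min 1 (‖y‖ ^ 2) * j ‖y‖))
    · exact Eventually.of_forall fun r => hhm.indicator (hAm r)
    · filter_upwards [self_mem_nhdsWithin] with r hr
      exact Eventually.of_forall (hbound r (le_of_lt hr))
    · exact hjint.const_mul C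
    · filter_upwards [measure_eq_zero_iff_ae_notMem.mp h0] with y hy
      have hy0 : 0 < ‖y‖ := norm_pos_iff.mpr (by simpa using hy)
      have hev : (fun r => (A r).indicator h y) =ᶠ[𝓝[>] (0:ℝ)]
          (fun _ => (A 0).indicator h y) := by
        filter_upwards [Ioo_mem_nhdsGT_of_mem ⟨le_rfl, hy0⟩] with r hr
        by_cases h1 : ‖y‖ ≤ 1
        · exact (Set.indicator_of_mem (show y ∈ A r from ⟨hr.2, h1⟩) h).trans
            (Set.indicator_of_mem (show y ∈ A 0 from ⟨hy0, h1⟩) h).symm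
        · exact (Set.indicator_of_notMem (fun hc => h1 hc.2) h).trans
            (Set.indicator_of_notMem (fun hc => h1 hc.2) h).symm
      exact tendsto_const_nhds.congr' hev.symm
  -- conclude
  rw [HasPVLim]
  have hAeq : A 0 = {y : EuclideanSpace ℝ (Fin d) | 0 < ‖y‖ ∧ ‖y‖ ≤ 1} := rfl
  apply Tendsto.congr' _ (hmain.add (tendsto_const_nhds
    (x := ∫ y in B, (w (x + y) - w x) * j ‖y‖)))
  filter_upwards [Ioo_mem_nhdsGT_of_mem ⟨le_rfl, one_pos⟩] with r hr
  exact (hdecomp r hr).symm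


/-- For a `C²` function `v` in `L¹(ℝ^d, (1∧j(|x|))dx)` and a convex `C²` function `γ`
with `γ(0) = 0` and bounded derivative, the principal values `Lv(x)` and `L(γ∘v)(x)`
exist and `L(γ∘v)(x) ≥ γ'(v(x))·Lv(x)`. -/
theorem pv_convex_composition_inequality
    (d : ℕ) (hd : 2 ≤ d)
    (j : ℝ → ℝ) (hjpos : ∀ r > 0, 0 < j r) (hjanti : AntitoneOn j (Set.Ioi 0))
    (hjint : Integrable (fun y : EuclideanSpace ℝ (Fin d) => min 1 (‖y‖ ^ 2) * j ‖y‖))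
    (κ : ℝ) (hκ : 1 ≤ κ) (hjdoub : ∀ r > 0, j r ≤ κ * j (2 * r))
    (v : EuclideanSpace ℝ (Fin d) → ℝ) (hvC2 : ContDiff ℝ 2 v)
    (hvL1 : Integrable (fun x => v x * min 1 (j ‖x‖)))
    (γ : ℝ → ℝ) (hγC2 : ContDiff ℝ 2 γ) (hγconv : ConvexOn ℝ Set.univ γ)
    (hγ0 : γ 0 = 0) (K : ℝ) (hγ' : ∀ t, |deriv γ t| ≤ K) :
    ∀ x, ∃ ℓ ℓ' : ℝ, HasPVLim d j v x ℓ ∧ HasPVLim d j (fun y => γ (v y)) x ℓ' ∧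
      deriv γ (v x) * ℓ ≤ ℓ' := by
  intro x
  haveI : Nontrivial (EuclideanSpace ℝ (Fin d)) := by
    refine ⟨EuclideanSpace.single (⟨0, by omega⟩ : Fin d) (1:ℝ), 0, ?_⟩
    intro hc
    have := congrArg (fun f => f (⟨0, by omega⟩ : Fin d)) hc
    simp [EuclideanSpace.single] at this
  have h0 : volume ({0} : Set (EuclideanSpace ℝ (Fin d))) = 0 := measure_singleton 0
  have hjm : AEStronglyMeasurable (fun y : EuclideanSpace ℝ (Fin d) => j ‖y‖) volume :=
    aesm_j_norm j hjint h0
  have hj0 : ∀ s : ℝ, 0 < s → 0 ≤ j s := fun s hs => (hjpos s hs).le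
  have hγd : Differentiable ℝ γ := hγC2.differentiable (by norm_num)
  have hγvC2 : ContDiff ℝ 2 (fun y => γ (v y)) := hγC2.comp hvC2
  -- L¹ bound for γ ∘ v
  have hK0 : 0 ≤ K := le_trans (abs_nonneg _) (hγ' 0)
  have hlip : ∀ t, |γ t| ≤ K * |t| := by
    intro t
    have := convex_univ.norm_image_sub_le_of_norm_deriv_le (s := (univ : Set ℝ))
      (fun u _ => hγd u) (fun u _ => by simpa [Real.norm_eq_abs] using hγ' u)
      (mem_univ 0) (mem_univ t)
    simpa [hγ0, Real.norm_eq_abs] using this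
  have hγvL1 : Integrable
      (fun z : EuclideanSpace ℝ (Fin d) => γ (v z) * min 1 (j ‖z‖)) volume := by
    have haesm : AEStronglyMeasurable
        (fun z : EuclideanSpace ℝ (Fin d) => γ (v z) * min 1 (j ‖z‖)) volume := by
      apply AEStronglyMeasurable.mul
      · exact (hγC2.continuous.comp hvC2.continuous).aestronglyMeasurable
      · exact (aemeasurable_const.min hjm.aemeasurable).aestronglyMeasurable
    refine Integrable.mono' (hvL1.abs.const_mul K) haesm ?_
    filter_upwards with z
    rw [Real.norm_eq_abs, abs_mul, abs_mul]
    calc |γ (v z)| * |min 1 (j ‖z‖)| ≤ (K * |v z|) * |min 1 (j ‖z‖)| :=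
          mul_le_mul_of_nonneg_right (hlip (v z)) (abs_nonneg _)
    _ = K * (|v z| * |min 1 (j ‖z‖)|) := by ring
  -- the two principal values
  have hv := hasPVLim_of_C2 h0 j hjpos hjanti hjint κ hκ hjdoub hjm v hvC2 hvL1 x
  have hγv := hasPVLim_of_C2 h0 j hjpos hjanti hjint κ hκ hjdoub hjm
    (fun y => γ (v y)) hγvC2 hγvL1 x
  set c : ℝ := deriv γ (v x) with hc
  refine ⟨_, _, hv, hγv, ?_⟩
  -- comparison of the limits
  set ℓ : ℝ := (∫ y in {y : EuclideanSpace ℝ (Fin d) | 0 < ‖y‖ ∧ ‖y‖ ≤ 1},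
      (v (x + y) - v x - fderiv ℝ v x y) * j ‖y‖) +
    ∫ y in {y : EuclideanSpace ℝ (Fin d) | 1 < ‖y‖}, (v (x + y) - v x) * j ‖y‖ with hℓ
  set ℓ' : ℝ := (∫ y in {y : EuclideanSpace ℝ (Fin d) | 0 < ‖y‖ ∧ ‖y‖ ≤ 1},
      (γ (v (x + y)) - γ (v x) - fderiv ℝ (fun y => γ (v y)) x y) * j ‖y‖) +
    ∫ y in {y : EuclideanSpace ℝ (Fin d) | 1 < ‖y‖}, (γ (v (x + y)) - γ (v x)) * j ‖y‖ with hℓ'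
  have hsub : Tendsto (fun r => truncL d j (fun y => γ (v y)) x r - c * truncL d j v x r)
      (𝓝[>] (0:ℝ)) (𝓝 (ℓ' - c * ℓ)) := hγv.sub (hv.const_mul c)
  have hnn : ∀ᶠ r in 𝓝[>] (0:ℝ),
      0 ≤ truncL d j (fun y => γ (v y)) x r - c * truncL d j v x r := by
    filter_upwards [self_mem_nhdsWithin] with r hr
    have hr : (0:ℝ) < r := hr
    have hIv := integrableOn_truncand j hjpos hjanti hjint κ hκ hjdoub hjm
      v hvC2.continuous hvL1 x r hr
    have hIγ := integrableOn_truncand j hjpos hjanti hjint κ hκ hjdoub hjm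
      (fun y => γ (v y)) hγvC2.continuous hγvL1 x r hr
    have heq : truncL d j (fun y => γ (v y)) x r - c * truncL d j v x r =
        ∫ y in {y : EuclideanSpace ℝ (Fin d) | r < ‖y‖},
          ((γ (v (x + y)) - γ (v x)) * j ‖y‖ - c * ((v (x + y) - v x) * j ‖y‖)) := by
      rw [integral_sub hIγ (hIv.const_mul c), integral_const_mul]
      rfl
    rw [heq]
    apply setIntegral_nonneg (measurableSet_lt measurable_const measurable_norm)
    intro y hy
    have hy : r < ‖y‖ := hy
    have hjy : 0 ≤ j ‖y‖ := hj0 _ (lt_trans hr hy)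
    have ht := tangent_line γ hγd hγconv (v (x + y)) (v x)
    nlinarith
  have hfin : 0 ≤ ℓ' - c * ℓ := ge_of_tendsto hsub hnn
  linarith
end
end
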